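/- arXiv:2602.01337 — 8 statements merged into one kernel-verified Lean document; each statement's English description precedes it below -/
import Mathlib

section
/- Let P and Q be real symmetric positive-definite n×n matrices, A a real n×n matrix and C a real m×n matrix such that P − AᵀQA + CᵀC ≻ 0. Define L := −A(P + CᵀC)⁻¹Cᵀ. Then P − (A + LC)ᵀQ(A + LC) ≻ 0. -/
/-!
With `S = P + CᴴC` and `T = S⁻¹P`, the gain `L = -AS⁻¹Cᴴ` turns the closed loop into
`A + LC = AT`, and
`P - (AT)ᴴQ(AT) = Tᴴ(S - AᴴQA)T + (P - PS⁻¹P)`.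
The first summand is positive definite, being a congruence of `S - AᴴQA ≻ 0` by the invertible
`T`; the second is positive semidefinite because
`P - PS⁻¹P = (1 - T)ᴴP(1 - T) + Tᴴ(S - P)T`.
-/

open Matrix

open scoped ComplexOrder

namespace Matrix

variable {𝕜 n m : Type*} [RCLike 𝕜] [Fintype n] [DecidableEq n] [Fintype m]

noncomputable def observerGain (P A : Matrix n n 𝕜) (C : Matrix m n 𝕜) : Matrix n m 𝕜 :=
  -(A * (P + Cᴴ * C)⁻¹ * Cᴴ)

theorem conjTranspose_nonsing_inv_mul {S P : Matrix n n 𝕜} (hS : S.IsHermitian)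
    (hP : P.IsHermitian) : (S⁻¹ * P)ᴴ = P * S⁻¹ := by
  rw [conjTranspose_mul, conjTranspose_nonsing_inv, hS.eq, hP.eq]

theorem posSemidef_sub_mul_inv_mul {P S : Matrix n n 𝕜} (hP : P.PosSemidef)
    (hSP : (S - P).PosSemidef) (hS : IsUnit S) : (P - P * S⁻¹ * P).PosSemidef := by
  have hSh : S.IsHermitian := by simpa using hP.isHermitian.add hSP.isHermitian
  have hSS : S⁻¹ * S = 1 := S.nonsing_inv_mul (S.isUnit_iff_isUnit_det.mp hS)
  have key : P - P * S⁻¹ * P =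
      (1 - S⁻¹ * P)ᴴ * P * (1 - S⁻¹ * P) + (S⁻¹ * P)ᴴ * (S - P) * (S⁻¹ * P) := by
    rw [conjTranspose_sub, conjTranspose_one, conjTranspose_nonsing_inv_mul hSh hP.isHermitian,
      mul_sub (P * S⁻¹), sub_mul _ _ (S⁻¹ * P),
      show P * S⁻¹ * S = P by rw [mul_assoc, hSS, mul_one]]
    noncomm_ring
  rw [key]
  exact (hP.conjTranspose_mul_mul_same _).add (hSP.conjTranspose_mul_mul_same _)

theorem add_observerGain_mul (A : Matrix n n 𝕜) {P : Matrix n n 𝕜} (C : Matrix m n 𝕜)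
    (hS : IsUnit (P + Cᴴ * C)) :
    A + observerGain P A C * C = A * (P + Cᴴ * C)⁻¹ * P := by
  set S := P + Cᴴ * C with hSdef
  have hSS : S⁻¹ * S = 1 := S.nonsing_inv_mul (S.isUnit_iff_isUnit_det.mp hS)
  calc A + observerGain P A C * C = A * S⁻¹ * S - A * S⁻¹ * (Cᴴ * C) := by
        rw [observerGain, mul_assoc A, hSS, mul_one, Matrix.neg_mul,
          Matrix.mul_assoc (A * S⁻¹), sub_eq_add_neg]
    _ = A * S⁻¹ * P := by rw [← Matrix.mul_sub, hSdef, add_sub_cancel_right]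

theorem PosDef.sub_conjTranspose_closedLoop_mul_mul {P Q A : Matrix n n 𝕜} {C : Matrix m n 𝕜}
    (hP : P.PosDef) (h : (P - Aᴴ * Q * A + Cᴴ * C).PosDef) :
    (P - (A + observerGain P A C * C)ᴴ * Q * (A + observerGain P A C * C)).PosDef := by
  have hCC : (Cᴴ * C).PosSemidef := posSemidef_conjTranspose_mul_self C
  have hS : (P + Cᴴ * C).PosDef := hP.add_posSemidef hCC
  rw [add_observerGain_mul A C hS.isUnit]
  set S := P + Cᴴ * C with hSdef
  have hSS : S⁻¹ * S = 1 := S.nonsing_inv_mul (S.isUnit_iff_isUnit_det.mp hS.isUnit)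
  have hT : IsUnit (S⁻¹ * P) := (isUnit_nonsing_inv_iff.mpr hS.isUnit).mul hP.isUnit
  have decomp : P - (A * S⁻¹ * P)ᴴ * Q * (A * S⁻¹ * P) =
      star (S⁻¹ * P) * (P - Aᴴ * Q * A + Cᴴ * C) * (S⁻¹ * P) + (P - P * S⁻¹ * P) := by
    rw [star_eq_conjTranspose, show P - Aᴴ * Q * A + Cᴴ * C = S - Aᴴ * Q * A by rw [hSdef]; abel,
      mul_assoc A, conjTranspose_mul, conjTranspose_nonsing_inv_mul hS.isHermitian hP.isHermitian,
      Matrix.mul_sub, Matrix.sub_mul, show P * S⁻¹ * S = P by rw [mul_assoc, hSS, mul_one]]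
    noncomm_ring
  rw [decomp]
  exact ((IsUnit.posDef_star_left_conjugate_iff hT).mpr h).add_posSemidef
    (posSemidef_sub_mul_inv_mul hP.posSemidef (by rwa [hSdef, add_sub_cancel_left]) hS.isUnit)

end Matrix

theorem stmt_0_general {n m : ℕ} (P Q A : Matrix (Fin n) (Fin n) ℝ)
    (C : Matrix (Fin m) (Fin n) ℝ)
    (hP : P.PosDef)
    (h : (P - Aᵀ * Q * A + Cᵀ * C).PosDef) :
    ∀ L : Matrix (Fin n) (Fin m) ℝ, L = -(A * (P + Cᵀ * C)⁻¹ * Cᵀ) →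
      (P - (A + L * C)ᵀ * Q * (A + L * C)).PosDef := by
  rintro L rfl
  simp only [← conjTranspose_eq_transpose_of_trivial] at h ⊢
  exact hP.sub_conjTranspose_closedLoop_mul_mul h

/-- If `P, Q ≻ 0` are symmetric, `P − AᵀQA + CᵀC ≻ 0`, and
`L := −A(P + CᵀC)⁻¹Cᵀ`, then `P − (A + LC)ᵀQ(A + LC) ≻ 0`. -/
theorem stmt_0 {n m : ℕ} (P Q A : Matrix (Fin n) (Fin n) ℝ)
    (C : Matrix (Fin m) (Fin n) ℝ)
    (hP : P.PosDef) (hQ : Q.PosDef)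
    (h : (P - Aᵀ * Q * A + Cᵀ * C).PosDef) :
    ∀ L : Matrix (Fin n) (Fin m) ℝ, L = -(A * (P + Cᵀ * C)⁻¹ * Cᵀ) →
      (P - (A + L * C)ᵀ * Q * (A + L * C)).PosDef :=
  stmt_0_general P Q A C hP h
end

section
/- Consider the polytopic setup: a set ℙ ⊆ ℝ^{n_p}, continuous functions ξ_i : ℙ → ℝ_{≥0}, i = 1,…,N, with ∑_{i=1}^N ξ_i(π) = 1 for all π ∈ ℙ, matrices A_i ∈ ℝ^{n_x×n_x} and C ∈ ℝ^{n_y×n_x}, and A(π) := ∑_i ξ_i(π)A_i. Suppose there exist symmetric positive-definite matrices P̄_i ∈ ℝ^{n_x×n_x}, i = 1,…,N, such that P̄_i − A_iᵀP̄_jA_i + CᵀC ≻ 0 for all i,j ∈ {1,…,N}. Define P(π) := ∑_i ξ_i(π)P̄_i and the observer gain L̄(π) := −∑_i ξ_i(π) A_i(P̄_i + CᵀC)⁻¹Cᵀ. Then for all π, π₊ ∈ ℙ: P(π) − (A(π) + L̄(π)C)ᵀ P(π₊) (A(π) + L̄(π)C) ≻ 0. -/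
/-!
With `K = CᵀC` and `Sᵢ = P̄ᵢ + K`, the gain is chosen vertexwise, so the closed loop
`A(π) + L̄(π)C` is the convex combination `∑ ξᵢ(π) Fᵢ` of `Fᵢ = Aᵢ - AᵢSᵢ⁻¹K = Aᵢ(Sᵢ⁻¹P̄ᵢ)`.

At the vertices,
`P̄ᵢ - FᵢᵀP̄ⱼFᵢ = (Sᵢ⁻¹P̄ᵢ)ᵀ(Sᵢ - AᵢᵀP̄ⱼAᵢ)(Sᵢ⁻¹P̄ᵢ) + (P̄ᵢ - P̄ᵢSᵢ⁻¹P̄ᵢ)`: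
the first term is a congruence of the LMI, and the second is a Schur complement of the
block matrix `[[Sᵢ, P̄ᵢ], [P̄ᵢ, P̄ᵢ]]`, whose other Schur complement is `K ⪰ 0`.

Away from the vertices, `Q = P(π₊)` is a convex combination of the `P̄ⱼ`, and `F ↦ FᵀQF` is
matrix convex: for `G = ∑ aᵢFᵢ`, `∑ aᵢFᵢᵀQFᵢ - GᵀQG = ∑ aᵢ(Fᵢ - G)ᵀQ(Fᵢ - G) ⪰ 0`. Hence
`P(π) - GᵀQG` dominates `∑ᵢⱼ aᵢbⱼ(P̄ᵢ - FᵢᵀP̄ⱼFᵢ) ≻ 0`.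
-/

open Matrix Finset
open scoped ComplexOrder

namespace Matrix

variable {𝕜 : Type*} [RCLike 𝕜] {m n ι : Type*} [Fintype ι]

theorem posDef_sum_smul {w : ι → ℝ} (hw : ∀ i, 0 ≤ w i) (hw_pos : 0 < ∑ i, w i)
    {M : ι → Matrix n n 𝕜} (hM : ∀ i, (M i).PosDef) : (∑ i, w i • M i).PosDef := by
  classical
  obtain ⟨i₀, -, hi₀⟩ := exists_lt_of_sum_lt (s := univ) (f := 0) (g := w) (by simpa using hw_pos)
  rw [← add_sum_erase _ _ (mem_univ i₀)]
  exact ((hM i₀).smul hi₀).add_posSemidef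
    (posSemidef_sum _ fun i _ => (hM i).posSemidef.smul (hw i))

variable [Fintype n]

theorem sum_smul_conjTranspose_sub_mul_mul_sub {a : ι → ℝ} (ha1 : ∑ i, a i = 1)
    (Q : Matrix n n 𝕜) (F : ι → Matrix n m 𝕜) :
    ∑ i, a i • ((F i - ∑ j, a j • F j)ᴴ * Q * (F i - ∑ j, a j • F j)) =
      ∑ i, a i • ((F i)ᴴ * Q * F i) - (∑ i, a i • F i)ᴴ * Q * ∑ i, a i • F i := by
  set G := ∑ j, a j • F j
  have hleft : ∑ i, a i • ((F i)ᴴ * Q * G) = Gᴴ * Q * G := by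
    simp [G, conjTranspose_sum, conjTranspose_smul, Matrix.sum_mul, Matrix.smul_mul]
  have hright : ∑ i, a i • (Gᴴ * Q * F i) = Gᴴ * Q * G := by
    simp [G, Matrix.mul_sum, Matrix.mul_smul]
  have hconst : ∑ i, a i • (Gᴴ * Q * G) = Gᴴ * Q * G := by
    rw [← sum_smul, ha1, one_smul]
  simp only [conjTranspose_sub, Matrix.sub_mul, Matrix.mul_sub, smul_sub, sum_sub_distrib,
    hleft, hright, hconst]
  abel

theorem posDef_sum_smul_sub_conjTranspose_mul_sum_smul_mul {a b : ι → ℝ}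
    (ha : ∀ i, 0 ≤ a i) (ha1 : ∑ i, a i = 1) (hb : ∀ j, 0 ≤ b j) (hb1 : ∑ j, b j = 1)
    {P F : ι → Matrix n n 𝕜} (hP : ∀ i, (P i).PosSemidef)
    (hPF : ∀ i j, (P i - (F i)ᴴ * P j * F i).PosDef) :
    (∑ i, a i • P i - (∑ i, a i • F i)ᴴ * (∑ j, b j • P j) * ∑ i, a i • F i).PosDef := by
  set Q := ∑ j, b j • P j
  set G := ∑ i, a i • F i
  have hQ : Q.PosSemidef := posSemidef_sum _ fun j _ => (hP j).smul (hb j)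
  have hPQF : ∀ i, (P i - (F i)ᴴ * Q * F i).PosDef := fun i => by
    have : P i - (F i)ᴴ * Q * F i = ∑ j, b j • (P i - (F i)ᴴ * P j * F i) := by
      simp only [Q, smul_sub, sum_sub_distrib, ← sum_smul, hb1, one_smul, Matrix.mul_sum,
        Matrix.sum_mul, Matrix.mul_smul, Matrix.smul_mul]
    rw [this]
    exact posDef_sum_smul hb (hb1 ▸ one_pos) (hPF i)
  have hsplit : ∑ i, a i • P i - Gᴴ * Q * G = ∑ i, a i • (P i - (F i)ᴴ * Q * F i) +
      ∑ i, a i • ((F i - G)ᴴ * Q * (F i - G)) := by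
    rw [sum_smul_conjTranspose_sub_mul_mul_sub ha1]
    simp only [smul_sub, sum_sub_distrib]
    abel
  rw [hsplit]
  exact (posDef_sum_smul ha (ha1 ▸ one_pos) hPQF).add_posSemidef
    (posSemidef_sum _ fun i _ => (hQ.conjTranspose_mul_mul_same _).smul (ha i))

variable [DecidableEq n]

theorem PosDef.posSemidef_sub_mul_inv_add_mul {P K : Matrix n n 𝕜} (hP : P.PosDef)
    (hK : K.PosSemidef) : (P - P * (P + K)⁻¹ * P).PosSemidef := by
  have hS : (P + K).PosDef := hP.add_posSemidef hK
  have := hS.isUnit.invertible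
  have := hP.isUnit.invertible
  have hblock : (fromBlocks (P + K) P Pᴴ P).PosSemidef := by
    rw [PosDef.fromBlocks₂₂ _ _ hP, hP.1.eq, mul_inv_of_invertible, Matrix.one_mul,
      add_sub_cancel_left]
    exact hK
  rwa [PosDef.fromBlocks₁₁ _ _ hS, hP.1.eq] at hblock

theorem PosDef.sub_conjTranspose_mul_mul_sub_mul_inv_add_mul {P P' K A : Matrix n n 𝕜}
    (hP : P.PosDef) (hK : K.PosSemidef) (hLMI : (P - Aᴴ * P' * A + K).PosDef) :
    (P - (A - A * (P + K)⁻¹ * K)ᴴ * P' * (A - A * (P + K)⁻¹ * K)).PosDef := by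
  set S := P + K
  have hS : S.PosDef := hP.add_posSemidef hK
  have := hS.isUnit.invertible
  set T := S⁻¹ * P
  have hAT : A - A * S⁻¹ * K = A * T := by
    rw [show K = S - P by simp [S]]
    simp [T, Matrix.mul_sub, Matrix.mul_assoc]
  have hTST : Tᴴ * S * T = P * S⁻¹ * P := by
    simp [T, conjTranspose_nonsing_inv, hS.1.eq, hP.1.eq, Matrix.mul_assoc]
  have hsplit : P - (A * T)ᴴ * P' * (A * T) =
      Tᴴ * (S - Aᴴ * P' * A) * T + (P - P * S⁻¹ * P) := by
    rw [Matrix.mul_sub, Matrix.sub_mul, hTST]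
    simp only [conjTranspose_mul, Matrix.mul_assoc]
    abel
  have hT : IsUnit T := hS.inv.isUnit.mul hP.isUnit
  rw [hAT, hsplit]
  refine PosDef.add_posSemidef ?_ (hP.posSemidef_sub_mul_inv_add_mul hK)
  exact PosDef.conjTranspose_mul_mul_same (by rwa [sub_add_eq_add_sub] at hLMI)
    (mulVec_injective_of_isUnit hT)

end Matrix

theorem stmt_1_general {np nx ny N : ℕ} (Pset : Set (Fin np → ℝ))
    (ξ : Fin N → (Fin np → ℝ) → ℝ)
    (hnonneg : ∀ i, ∀ π ∈ Pset, 0 ≤ ξ i π)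
    (hsum : ∀ π ∈ Pset, ∑ i, ξ i π = 1)
    (A : Fin N → Matrix (Fin nx) (Fin nx) ℝ)
    (C : Matrix (Fin ny) (Fin nx) ℝ)
    (Pbar : Fin N → Matrix (Fin nx) (Fin nx) ℝ)
    (hPD : ∀ i, (Pbar i).PosDef)
    (hLMI : ∀ i j, (Pbar i - (A i)ᵀ * Pbar j * A i + Cᵀ * C).PosDef) :
    ∀ π ∈ Pset, ∀ πplus ∈ Pset,
      ((∑ i, ξ i π • Pbar i) -
        ((∑ i, ξ i π • A i) + (-∑ i, ξ i π • (A i * (Pbar i + Cᵀ * C)⁻¹ * Cᵀ)) * C)ᵀ *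
          (∑ i, ξ i πplus • Pbar i) *
        ((∑ i, ξ i π • A i) + (-∑ i, ξ i π • (A i * (Pbar i + Cᵀ * C)⁻¹ * Cᵀ)) * C)).PosDef := by
  intro π hπ πplus hπplus
  have hK : (Cᵀ * C).PosSemidef := by
    simpa only [conjTranspose_eq_transpose_of_trivial] using posSemidef_conjTranspose_mul_self C
  have hclosedLoop :
      (∑ i, ξ i π • A i) + (-∑ i, ξ i π • (A i * (Pbar i + Cᵀ * C)⁻¹ * Cᵀ)) * C =
        ∑ i, ξ i π • (A i - A i * (Pbar i + Cᵀ * C)⁻¹ * (Cᵀ * C)) := by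
    simp only [Matrix.neg_mul, Matrix.sum_mul, Matrix.smul_mul, ← sub_eq_add_neg,
      ← sum_sub_distrib, smul_sub, Matrix.mul_assoc]
  rw [hclosedLoop, ← conjTranspose_eq_transpose_of_trivial]
  refine posDef_sum_smul_sub_conjTranspose_mul_sum_smul_mul (hnonneg · π hπ) (hsum π hπ)
    (hnonneg · πplus hπplus) (hsum πplus hπplus) (fun i => (hPD i).posSemidef) fun i j => ?_
  refine (hPD i).sub_conjTranspose_mul_mul_sub_mul_inv_add_mul hK ?_
  simpa only [conjTranspose_eq_transpose_of_trivial] using hLMI i j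

/-- sufficiency direction of Theorem 1: In the polytopic setup, if the
vertex LMIs `P̄ᵢ − AᵢᵀP̄ⱼAᵢ + CᵀC ≻ 0` hold for symmetric positive definite `P̄ᵢ`,
then with `P(π) = ∑ᵢ ξᵢ(π)P̄ᵢ`, `A(π) = ∑ᵢ ξᵢ(π)Aᵢ` and the observer gain
`L̄(π) = −∑ᵢ ξᵢ(π)Aᵢ(P̄ᵢ + CᵀC)⁻¹Cᵀ`, we have
`P(π) − (A(π) + L̄(π)C)ᵀP(πplus)(A(π) + L̄(π)C) ≻ 0` for all `π, πplus ∈ ℙ`. -/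
theorem stmt_1 {np nx ny N : ℕ} (Pset : Set (Fin np → ℝ))
    (ξ : Fin N → (Fin np → ℝ) → ℝ)
    (hcont : ∀ i, ContinuousOn (ξ i) Pset)
    (hnonneg : ∀ i, ∀ π ∈ Pset, 0 ≤ ξ i π)
    (hsum : ∀ π ∈ Pset, ∑ i, ξ i π = 1)
    (A : Fin N → Matrix (Fin nx) (Fin nx) ℝ)
    (C : Matrix (Fin ny) (Fin nx) ℝ)
    (Pbar : Fin N → Matrix (Fin nx) (Fin nx) ℝ)
    (hPD : ∀ i, (Pbar i).PosDef)
    (hLMI : ∀ i j, (Pbar i - (A i)ᵀ * Pbar j * A i + Cᵀ * C).PosDef) :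
    ∀ π ∈ Pset, ∀ πplus ∈ Pset,
      ((∑ i, ξ i π • Pbar i) -
        ((∑ i, ξ i π • A i) + (-∑ i, ξ i π • (A i * (Pbar i + Cᵀ * C)⁻¹ * Cᵀ)) * C)ᵀ *
          (∑ i, ξ i πplus • Pbar i) *
        ((∑ i, ξ i π • A i) + (-∑ i, ξ i π • (A i * (Pbar i + Cᵀ * C)⁻¹ * Cᵀ)) * C)).PosDef :=
  stmt_1_general Pset ξ hnonneg hsum A C Pbar hPD hLMI
end

section
/- Consider the polytopic setup: a compact set ℙ ⊆ ℝ^{n_p}, continuous functions ξ_i : ℙ → ℝ_{≥0}, i = 1,…,N, with ∑_{i=1}^N ξ_i(π) = 1 for all π ∈ ℙ, matrices A_i ∈ ℝ^{n_x×n_x} and C ∈ ℝ^{n_y×n_x}, and A(π) := ∑_i ξ_i(π)A_i. Assume strict polytopicity: for each i ∈ {1,…,N} there exists π_i ∈ ℙ with ξ_j(π_i) = 1 if j = i and 0 otherwise. Suppose the system is poly-Q detectable, i.e., there exist a map L : ℕ × (ℕ → ℙ) → ℝ^{n_x×n_y}, symmetric matrices P̄_i ∈ ℝ^{n_x×n_x}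 with P(π) := ∑_i ξ_i(π)P̄_i, and constants a₁,a₂,a₃ > 0 such that for every sequence p : ℕ → ℙ, every k ∈ ℕ and every e ∈ ℝ^{n_x}: a₁‖e‖² ≤ eᵀP(p_k)e ≤ a₂‖e‖², and with e₊ := (A(p_k) + L(k,p)C)e it holds that e₊ᵀP(p_{k+1})e₊ ≤ eᵀP(p_k)e − a₃‖e‖². Then there exist symmetric positive-definite matrices Q̄_i ∈ ℝ^{n_x×n_x}, i = 1,…,N, such that Q̄_i − A_iᵀQ̄_jA_i + CᵀC ≻ 0 for all i,j ∈ {1,…,N}. -/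
/-!
At a vertex `π_i` of the polytope the weights `ξ` form a unit vector. Along the constant sequence
`π_i` the Lyapunov bounds make `P̄_i` positive definite; along the sequence jumping from `π_i` to
`π_j` the decrease condition gives `eᵀ(P̄_i - A_iᵀP̄_jA_i)e ≥ a₃ eᵀe` whenever `Ce = 0`, since the
observer gain then drops out. Finsler's lemma (positivity of `M` on `ker C` forces
`εM + CᵀC ≻ 0` for all small `ε > 0`) applied to the finitely many pairs `(i, j)` yields one `ε`,
and `Q̄_i := ε P̄_i` works.
-/

open Matrix Filter Topology

theorem IsCompact.eventually_forall_pos_mul_add {X : Type*} [TopologicalSpace X] {S : Set X}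
    (hS : IsCompact S) {q r : X → ℝ} (hq : Continuous q) (hr : Continuous r)
    (hr_nonneg : ∀ x ∈ S, 0 ≤ r x) (hq_pos : ∀ x ∈ S, r x = 0 → 0 < q x) :
    ∀ᶠ t in 𝓝[>] (0 : ℝ), ∀ x ∈ S, 0 < t * q x + r x := by
  have hK : IsCompact (S ∩ {x | q x ≤ 0}) := hS.inter_right (isClosed_le hq continuous_const)
  obtain ⟨δ, hδ, hδr⟩ := hK.exists_forall_le' hr.continuousOn fun x ⟨hxS, hqx⟩ =>
    (hr_nonneg x hxS).lt_of_ne fun h => (hq_pos x hxS h.symm).not_ge hqx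
  obtain ⟨b, hb⟩ := hS.bddBelow_image hq.continuousOn
  have hε : 0 < δ / (|b| + 1) := by positivity
  filter_upwards [Ioc_mem_nhdsGT hε] with t ⟨ht, htε⟩ x hx
  by_cases hqx : 0 < q x
  · exact add_pos_of_pos_of_nonneg (mul_pos ht hqx) (hr_nonneg x hx)
  · -- on the compact part where `q ≤ 0`, the lower bound `δ` of `r` beats `t * q ≥ -t |b|`
    have hbq : -|b| ≤ q x := (neg_abs_le b).trans (hb (Set.mem_image_of_mem q hx))
    have htb : t * |b| < δ := by
      calc t * |b| ≤ δ / (|b| + 1) * |b| := by gcongr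
        _ < δ := by rw [div_mul_eq_mul_div, div_lt_iff₀ (by positivity)]; nlinarith [abs_nonneg b]
    nlinarith [hδr x ⟨hx, not_lt.1 hqx⟩]

theorem Matrix.smul_dotProduct_mulVec_smul {n : Type*} [Fintype n] (M : Matrix n n ℝ) (c : ℝ)
    (x : n → ℝ) : (c • x) ⬝ᵥ (M *ᵥ (c • x)) = c ^ 2 * (x ⬝ᵥ (M *ᵥ x)) := by
  simp only [mulVec_smul, dotProduct_smul, smul_dotProduct, smul_eq_mul]; ring

theorem Matrix.eventually_posDef_smul_add_transpose_mul_self {m n : Type*} [Fintype m]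
    [Fintype n] {M : Matrix n n ℝ} (hM : M.IsHermitian) (C : Matrix m n ℝ)
    (h : ∀ x ≠ 0, C *ᵥ x = 0 → 0 < x ⬝ᵥ (M *ᵥ x)) :
    ∀ᶠ ε in 𝓝[>] (0 : ℝ), (ε • M + Cᵀ * C).PosDef := by
  have hCC : ∀ x, x ⬝ᵥ ((Cᵀ * C) *ᵥ x) = (C *ᵥ x) ⬝ᵥ (C *ᵥ x) := fun x => by
    rw [← mulVec_mulVec, dotProduct_mulVec, vecMul_transpose]
  have hsphere := (isCompact_sphere (0 : n → ℝ) 1).eventually_forall_pos_mul_add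
    (q := fun x => x ⬝ᵥ (M *ᵥ x)) (r := fun x => x ⬝ᵥ ((Cᵀ * C) *ᵥ x)) (by fun_prop) (by fun_prop)
    (fun x _ => by simpa [hCC] using dotProduct_star_self_nonneg (C *ᵥ x))
    (fun x hx hCx => h x (ne_zero_of_mem_unit_sphere ⟨x, hx⟩) (by simpa [hCC] using hCx))
  filter_upwards [hsphere] with ε hε
  refine .of_dotProduct_mulVec_pos ((hM.smul (.all ε)).add ?_) fun x hx => ?_
  · simpa using isHermitian_conjTranspose_mul_self C
  -- the quadratic form is homogeneous of degree two, so it suffices to test unit vectors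
  have hx' : ‖x‖⁻¹ • x ∈ Metric.sphere (0 : n → ℝ) 1 := by
    simp [norm_smul, inv_mul_cancel₀ (norm_ne_zero_iff.2 hx)]
  have hunit := hε _ hx'
  simp only [smul_dotProduct_mulVec_smul] at hunit
  rw [star_trivial, add_mulVec, dotProduct_add, smul_mulVec, dotProduct_smul, smul_eq_mul]
  have hc : 0 < ‖x‖⁻¹ ^ 2 := by positivity
  nlinarith

theorem Matrix.dotProduct_mulVec_sub_transpose_mul_mul {n : Type*} [Fintype n]
    (P Q A : Matrix n n ℝ) (x : n → ℝ) :
    x ⬝ᵥ ((P - Aᵀ * Q * A) *ᵥ x) = x ⬝ᵥ (P *ᵥ x) - (A *ᵥ x) ⬝ᵥ (Q *ᵥ (A *ᵥ x)) := by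
  rw [sub_mulVec, dotProduct_sub, ← mulVec_mulVec, ← mulVec_mulVec, dotProduct_mulVec x Aᵀ,
    vecMul_transpose]

theorem stmt_2_general {np nx ny N : ℕ} (Pset : Set (Fin np → ℝ))
    (ξ : Fin N → (Fin np → ℝ) → ℝ)
    (A : Fin N → Matrix (Fin nx) (Fin nx) ℝ)
    (C : Matrix (Fin ny) (Fin nx) ℝ)
    (hstrict : ∀ i, ∃ π ∈ Pset, ∀ j, ξ j π = if j = i then 1 else 0)
    (L : ℕ → (ℕ → (Fin np → ℝ)) → Matrix (Fin nx) (Fin ny) ℝ)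
    (Pbar : Fin N → Matrix (Fin nx) (Fin nx) ℝ)
    (hPsym : ∀ i, (Pbar i).IsSymm)
    (a₁ a₂ a₃ : ℝ) (ha₁ : 0 < a₁) (ha₃ : 0 < a₃)
    (hbounds : ∀ p : ℕ → (Fin np → ℝ), (∀ k, p k ∈ Pset) → ∀ (k : ℕ) (e : Fin nx → ℝ),
      a₁ * (e ⬝ᵥ e) ≤ e ⬝ᵥ ((∑ i, ξ i (p k) • Pbar i) *ᵥ e) ∧
      e ⬝ᵥ ((∑ i, ξ i (p k) • Pbar i) *ᵥ e) ≤ a₂ * (e ⬝ᵥ e))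
    (hdec : ∀ p : ℕ → (Fin np → ℝ), (∀ k, p k ∈ Pset) → ∀ (k : ℕ) (e : Fin nx → ℝ),
      ((((∑ i, ξ i (p k) • A i) + L k p * C) *ᵥ e) ⬝ᵥ
          ((∑ i, ξ i (p (k + 1)) • Pbar i) *ᵥ (((∑ i, ξ i (p k) • A i) + L k p * C) *ᵥ e)))
        ≤ e ⬝ᵥ ((∑ i, ξ i (p k) • Pbar i) *ᵥ e) - a₃ * (e ⬝ᵥ e)) :
    ∃ Qbar : Fin N → Matrix (Fin nx) (Fin nx) ℝ,
      (∀ i, (Qbar i).PosDef) ∧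
      ∀ i j, (Qbar i - (A i)ᵀ * Qbar j * A i + Cᵀ * C).PosDef := by
  choose π hπ hπξ using hstrict
  have hvertex : ∀ i (X : Fin N → Matrix (Fin nx) (Fin nx) ℝ), ∑ j, ξ j (π i) • X j = X i :=
    fun i X => by simp [hπξ i, ite_smul]
  have hself_pos : ∀ x : Fin nx → ℝ, x ≠ 0 → 0 < x ⬝ᵥ x := fun x hx => by
    simpa using dotProduct_star_self_pos_iff.2 hx
  have hP : ∀ i, (Pbar i).PosDef := fun i => .of_dotProduct_mulVec_pos
    (isHermitian_iff_isSymm.2 (hPsym i)) fun x hx => by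
      have := (hbounds (fun _ => π i) (fun _ => hπ i) 0 x).1
      rw [hvertex] at this
      simpa using (mul_pos ha₁ (hself_pos x hx)).trans_le this
  have hker : ∀ i j, ∀ x ≠ 0, C *ᵥ x = 0 → 0 < x ⬝ᵥ ((Pbar i - (A i)ᵀ * Pbar j * A i) *ᵥ x) := by
    intro i j x hx hCx
    let p : ℕ → Fin np → ℝ := fun k => if k = 0 then π i else π j
    have := hdec p (fun k => by by_cases hk : k = 0 <;> simp [p, hk, hπ]) 0 x
    simp only [p, if_pos rfl, zero_add, one_ne_zero, if_false, hvertex, add_mulVec,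
      ← mulVec_mulVec, hCx, mulVec_zero, add_zero] at this
    rw [dotProduct_mulVec_sub_transpose_mul_mul]
    nlinarith [hself_pos x hx]
  have hM : ∀ i j, (Pbar i - (A i)ᵀ * Pbar j * A i).IsHermitian := fun i j =>
    (hP i).1.sub (by simpa using isHermitian_conjTranspose_mul_mul (A i) (hP j).1)
  obtain ⟨ε, hε, hεpos⟩ := ((eventually_all.2 fun ij : Fin N × Fin N =>
    eventually_posDef_smul_add_transpose_mul_self (hM ij.1 ij.2) C (hker ij.1 ij.2)).and
    self_mem_nhdsWithin).exists
  refine ⟨fun i => ε • Pbar i, fun i => (hP i).smul hεpos, fun i j => ?_⟩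
  simpa [smul_sub, Matrix.mul_smul, Matrix.smul_mul] using hε (i, j)

/-- necessity direction of Theorem 1: If a strictly polytopic system is
poly-Q detectable (there is an observer gain `L(k,p)` and a poly-quadratic Lyapunov
function `V(π,e) = eᵀP(π)e` for the error system `e₊ = (A(p_k) + L(k,p)C)e`), then
there exist symmetric positive definite `Q̄ᵢ` with `Q̄ᵢ − AᵢᵀQ̄ⱼAᵢ + CᵀC ≻ 0` for all
`i, j`. -/
theorem stmt_2 {np nx ny N : ℕ} (Pset : Set (Fin np → ℝ)) (hcomp : IsCompact Pset)
    (ξ : Fin N → (Fin np → ℝ) → ℝ)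
    (hcont : ∀ i, ContinuousOn (ξ i) Pset)
    (hnonneg : ∀ i, ∀ π ∈ Pset, 0 ≤ ξ i π)
    (hsum : ∀ π ∈ Pset, ∑ i, ξ i π = 1)
    (A : Fin N → Matrix (Fin nx) (Fin nx) ℝ)
    (C : Matrix (Fin ny) (Fin nx) ℝ)
    (hstrict : ∀ i, ∃ π ∈ Pset, ∀ j, ξ j π = if j = i then 1 else 0)
    (L : ℕ → (ℕ → (Fin np → ℝ)) → Matrix (Fin nx) (Fin ny) ℝ)
    (Pbar : Fin N → Matrix (Fin nx) (Fin nx) ℝ)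
    (hPsym : ∀ i, (Pbar i).IsSymm)
    (a₁ a₂ a₃ : ℝ) (ha₁ : 0 < a₁) (ha₂ : 0 < a₂) (ha₃ : 0 < a₃)
    (hbounds : ∀ p : ℕ → (Fin np → ℝ), (∀ k, p k ∈ Pset) → ∀ (k : ℕ) (e : Fin nx → ℝ),
      a₁ * (e ⬝ᵥ e) ≤ e ⬝ᵥ ((∑ i, ξ i (p k) • Pbar i) *ᵥ e) ∧
      e ⬝ᵥ ((∑ i, ξ i (p k) • Pbar i) *ᵥ e) ≤ a₂ * (e ⬝ᵥ e))
    (hdec : ∀ p : ℕ → (Fin np → ℝ), (∀ k, p k ∈ Pset) → ∀ (k : ℕ) (e : Fin nx → ℝ),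
      ((((∑ i, ξ i (p k) • A i) + L k p * C) *ᵥ e) ⬝ᵥ
          ((∑ i, ξ i (p (k + 1)) • Pbar i) *ᵥ (((∑ i, ξ i (p k) • A i) + L k p * C) *ᵥ e)))
        ≤ e ⬝ᵥ ((∑ i, ξ i (p k) • Pbar i) *ᵥ e) - a₃ * (e ⬝ᵥ e)) :
    ∃ Qbar : Fin N → Matrix (Fin nx) (Fin nx) ℝ,
      (∀ i, (Qbar i).PosDef) ∧
      ∀ i j, (Qbar i - (A i)ᵀ * Qbar j * A i + Cᵀ * C).PosDef :=
  stmt_2_general Pset ξ A C hstrict L Pbar hPsym a₁ a₂ a₃ ha₁ ha₃ hbounds hdec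
end

section
/- Let P and Q be real symmetric positive-definite n×n matrices, A a real n×n matrix and C a real m×n matrix. Then P − AᵀQA + CᵀC ≻ 0 if and only if Q⁻¹ − A(P + CᵀC)⁻¹Aᵀ ≻ 0. -/
open Matrix

/-! Both conditions are Schur complements of one block matrix, `[[Q⁻¹, A], [Aᵀ, P + CᵀC]]`:
eliminating its lower-right block leaves `Q⁻¹ - A (P + CᵀC)⁻¹ Aᵀ`, eliminating its upper-left
block leaves `P + CᵀC - Aᵀ Q A`. When the eliminated diagonal block is positive definite, the
block matrix is positive definite iff its Schur complement is. -/

namespace Matrix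

variable {m n R K : Type*} [Fintype m] [Fintype n]

section StarOrderedRing

variable [CommRing R] [PartialOrder R] [StarRing R] [StarOrderedRing R]

omit [Fintype m] [Fintype n] [StarOrderedRing R] in
theorem posDef_submatrix_equiv {M : Matrix n n R} (e : m ≃ n) :
    (M.submatrix e e).PosDef ↔ M.PosDef :=
  ⟨fun h => by simpa using h.submatrix e.symm.injective, fun h => h.submatrix e.injective⟩

theorem posDef_fromBlocks₁₁_iff [DecidableEq m] {A : Matrix m m R} (B : Matrix m n R)
    (D : Matrix n n R) (hA : A.PosDef) [Invertible A] :
    (fromBlocks A B Bᴴ D).PosDef ↔ (D - Bᴴ * A⁻¹ * B).PosDef := by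
  rw [posDef_iff_dotProduct_mulVec, posDef_iff_dotProduct_mulVec,
    IsHermitian.fromBlocks₁₁ _ _ hA.1]
  refine and_congr_right fun _ => ⟨fun h y hy => ?_, fun h v hv => ?_⟩
  · have := h (x := -((A⁻¹ * B) *ᵥ y) ⊕ᵥ y)
      fun h0 => hy (funext fun i => by simpa using congr_fun h0 (Sum.inr i))
    rwa [dotProduct_mulVec, schur_complement_eq₁₁ B D _ _ hA.1, neg_add_cancel, dotProduct_zero,
      zero_add, ← dotProduct_mulVec] at this
  · rw [dotProduct_mulVec, ← Sum.elim_comp_inl_inr v, schur_complement_eq₁₁ B D _ _ hA.1,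
      ← dotProduct_mulVec, ← dotProduct_mulVec (star (v ∘ Sum.inr))]
    by_cases hy : v ∘ Sum.inr = 0
    · have hx : v ∘ Sum.inl ≠ 0 := fun hx =>
        hv (by rw [← Sum.elim_comp_inl_inr v, hx, hy]; exact Sum.elim_zero_zero)
      rw [hy, mulVec_zero, add_zero, star_zero, zero_dotProduct, add_zero]
      exact hA.dotProduct_mulVec_pos hx
    · exact add_pos_of_nonneg_of_pos (hA.posSemidef.dotProduct_mulVec_nonneg _) (h hy)

theorem posDef_fromBlocks₂₂_iff [DecidableEq n] (A : Matrix m m R) (B : Matrix m n R)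
    {D : Matrix n n R} (hD : D.PosDef) [Invertible D] :
    (fromBlocks A B Bᴴ D).PosDef ↔ (A - B * D⁻¹ * Bᴴ).PosDef := by
  rw [← posDef_submatrix_equiv (Equiv.sumComm n m), Equiv.sumComm_apply,
    fromBlocks_submatrix_sum_swap_sum_swap]
  convert posDef_fromBlocks₁₁_iff Bᴴ A hD <;> simp

end StarOrderedRing

variable [Field K] [PartialOrder K] [StarRing K] [StarOrderedRing K] [DecidableEq m] [DecidableEq n]

theorem posDef_sub_conjTranspose_mul_mul_iff {X : Matrix n n K} {Y : Matrix m m K}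
    (B : Matrix m n K) (hX : X.PosDef) (hY : Y.PosDef) :
    (X - Bᴴ * Y * B).PosDef ↔ (Y⁻¹ - B * X⁻¹ * Bᴴ).PosDef := by
  have := hX.isUnit.invertible
  have := hY.isUnit.invertible
  rw [← posDef_fromBlocks₂₂_iff _ _ hX, posDef_fromBlocks₁₁_iff _ _ hY.inv, inv_inv_of_invertible]

end Matrix

/-- For symmetric positive definite `P, Q`:
`P − AᵀQA + CᵀC ≻ 0 ↔ Q⁻¹ − A(P + CᵀC)⁻¹Aᵀ ≻ 0`. -/
theorem stmt_3 {n m : ℕ} (P Q A : Matrix (Fin n) (Fin n) ℝ)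
    (C : Matrix (Fin m) (Fin n) ℝ)
    (hP : P.PosDef) (hQ : Q.PosDef) :
    (P - Aᵀ * Q * A + Cᵀ * C).PosDef ↔ (Q⁻¹ - A * (P + Cᵀ * C)⁻¹ * Aᵀ).PosDef := by
  have hPC : (P + Cᵀ * C).PosDef :=
    hP.add_posSemidef (by simpa using posSemidef_conjTranspose_mul_self C)
  rw [sub_add_eq_add_sub, ← conjTranspose_eq_transpose_of_trivial A]
  exact posDef_sub_conjTranspose_mul_mul_iff A hPC hQ
end

section
/- Let S and S₊ be real symmetric positive-definite n×n matrices, A a real n×n matrix and B a real n×m matrix such that S₊ − ASAᵀ + BBᵀ ≻ 0. Define K := −Bᵀ(S₊ + BBᵀ)⁻¹A. Then S⁻¹ − (A + BK)ᵀ S₊⁻¹ (A + BK) ≻ 0. -/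
/-!
With `T = S₊ + BBᵀ` the gain `K = -BᵀT⁻¹A` gives the closed loop `A + BK = S₊T⁻¹A`, and
expanding `S₊ = T - BBᵀ` turns the claim into
`S⁻¹ - (A + BK)ᵀS₊⁻¹(A + BK) = (S⁻¹ - AᵀT⁻¹A) + KᵀK`.
The first summand is positive definite because the Woodbury identity writes its inverse as
`S + SAᵀ(T - ASAᵀ)⁻¹AS`, and `T - ASAᵀ = S₊ - ASAᵀ + BBᵀ ≻ 0` by hypothesis.
-/

open Matrix

namespace Matrix

variable {m n : Type*} [Fintype m] [Fintype n] [DecidableEq n]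

theorem PosDef.inv_sub_conjTranspose_mul_inv_mul [DecidableEq m] {𝕜 : Type*} [Field 𝕜]
    [PartialOrder 𝕜] [StarRing 𝕜] [StarOrderedRing 𝕜]
    {S : Matrix n n 𝕜} {T : Matrix m m 𝕜} {A : Matrix m n 𝕜}
    (hS : S.PosDef) (h : (T - A * S * Aᴴ).PosDef) : (S⁻¹ - Aᴴ * T⁻¹ * A).PosDef := by
  have hT : T.PosDef := by
    simpa using h.add_posSemidef (hS.posSemidef.mul_mul_conjTranspose_same A)
  have hSS : S⁻¹⁻¹ = S := nonsing_inv_nonsing_inv S ((isUnit_iff_isUnit_det S).mp hS.isUnit)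
  have hTT : T⁻¹⁻¹ = T := nonsing_inv_nonsing_inv T ((isUnit_iff_isUnit_det T).mp hT.isUnit)
  have woodbury := add_mul_mul_inv_eq_sub (A := S⁻¹) (U := -Aᴴ) (C := T⁻¹) (V := A)
    hS.inv.isUnit hT.inv.isUnit (by simpa [hSS, hTT, sub_eq_add_neg] using h.isUnit)
  simp only [hSS, hTT, Matrix.mul_neg, Matrix.neg_mul, ← sub_eq_add_neg] at woodbury
  rw [← posDef_inv_iff, woodbury, sub_neg_eq_add]
  refine hS.add_posSemidef ?_
  simpa only [conjTranspose_mul, hS.isHermitian.eq, Matrix.mul_assoc] using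
    h.inv.posSemidef.conjTranspose_mul_mul_same (A * S)

theorem closedLoop_conjTranspose_mul_inv_mul {R : Type*} [CommRing R] [StarRing R]
    {P A : Matrix n n R} {B : Matrix n m R} {K : Matrix m n R}
    (hP : P.IsHermitian) (hPu : IsUnit P) (hTu : IsUnit (P + B * Bᴴ))
    (hK : K = -(Bᴴ * (P + B * Bᴴ)⁻¹ * A)) :
    (A + B * K)ᴴ * P⁻¹ * (A + B * K) = Aᴴ * (P + B * Bᴴ)⁻¹ * A - Kᴴ * K := by
  set T := P + B * Bᴴ with hTdef
  set X := T⁻¹ * A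
  have hT : T.IsHermitian := hP.add (isHermitian_mul_conjTranspose_self B)
  have hPT : P = T - B * Bᴴ := by rw [hTdef, add_sub_cancel_right]
  have hTX : T * X = A := mul_nonsing_inv_cancel_left _ _ ((isUnit_iff_isUnit_det T).mp hTu)
  have hKX : K = -(Bᴴ * X) := by rw [hK, Matrix.mul_assoc]
  have hXTX : Xᴴ * T * X = Aᴴ * T⁻¹ * A := by
    rw [Matrix.mul_assoc, hTX, conjTranspose_mul, conjTranspose_nonsing_inv, hT.eq]
  clear_value X
  have hcl : A + B * K = P * X := by
    rw [hKX, hPT, Matrix.sub_mul, hTX, Matrix.mul_assoc, Matrix.mul_neg, sub_eq_add_neg]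
  calc (A + B * K)ᴴ * P⁻¹ * (A + B * K)
      = Xᴴ * (P * (P⁻¹ * P)) * X := by
        rw [hcl, conjTranspose_mul, hP.eq]; simp only [Matrix.mul_assoc]
    _ = Xᴴ * T * X - (Bᴴ * X)ᴴ * (Bᴴ * X) := by
        rw [nonsing_inv_mul _ ((isUnit_iff_isUnit_det P).mp hPu), Matrix.mul_one, hPT,
          Matrix.mul_sub, Matrix.sub_mul, conjTranspose_mul, conjTranspose_conjTranspose]
        simp only [Matrix.mul_assoc]
    _ = Aᴴ * T⁻¹ * A - Kᴴ * K := by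
        rw [hXTX, hKX, conjTranspose_neg, Matrix.neg_mul, Matrix.mul_neg, neg_neg]

end Matrix

/-- If `S, S₊ ≻ 0` are symmetric, `S₊ − ASAᵀ + BBᵀ ≻ 0`, and
`K := −Bᵀ(S₊ + BBᵀ)⁻¹A`, then `S⁻¹ − (A + BK)ᵀS₊⁻¹(A + BK) ≻ 0`. -/
theorem stmt_5 {n m : ℕ} (S Splus A : Matrix (Fin n) (Fin n) ℝ)
    (B : Matrix (Fin n) (Fin m) ℝ)
    (hS : S.PosDef) (hSplus : Splus.PosDef)
    (h : (Splus - A * S * Aᵀ + B * Bᵀ).PosDef) :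
    ∀ K : Matrix (Fin m) (Fin n) ℝ, K = -(Bᵀ * (Splus + B * Bᵀ)⁻¹ * A) →
      (S⁻¹ - (A + B * K)ᵀ * Splus⁻¹ * (A + B * K)).PosDef := by
  intro K hK
  simp only [← conjTranspose_eq_transpose_of_trivial] at h hK ⊢
  rw [sub_add_eq_add_sub] at h
  have hT : (Splus + B * Bᴴ).PosDef :=
    hSplus.add_posSemidef (posSemidef_self_mul_conjTranspose B)
  rw [closedLoop_conjTranspose_mul_inv_mul hSplus.isHermitian hSplus.isUnit hT.isUnit hK,
    sub_sub_eq_add_sub, add_sub_right_comm]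
  exact (hS.inv_sub_conjTranspose_mul_inv_mul h).add_posSemidef
    (posSemidef_conjTranspose_mul_self K)
end

section
/- Consider the polytopic setup: a compact set ℙ ⊆ ℝ^{n_p}, continuous functions ξ_i : ℙ → ℝ_{≥0}, i = 1,…,N, with ∑_{i=1}^N ξ_i(π) = 1 for all π ∈ ℙ, matrices A_i ∈ ℝ^{n_x×n_x} and B ∈ ℝ^{n_x×n_u}, and A(π) := ∑_i ξ_i(π)A_i. Assume strict polytopicity: for each i ∈ {1,…,N} there exists π_i ∈ ℙ with ξ_j(π_i) = 1 if j = i and 0 otherwise. Suppose the system is poly-Q stabilizable, i.e., there exist a map K : ℕ × (ℕ → ℙ) → ℝ^{n_u×n_x}, symmetric matrices P̄_i ∈ ℝ^{n_x×n_x} with P(π) := ∑_i ξ_i(π)P̄_i, and constants a₁,a₂,a₃ > 0 such that for every sequence p : ℕ → ℙ, every k ∈ ℕ and every x ∈ ℝ^{n_x}: a₁‖x‖² ≤ xᵀP(p_k)x ≤ a₂‖x‖², and with x₊ := (A(p_k) + BK(k,p))x it holds that x₊ᵀP(p_{k+1})x₊ ≤ xᵀP(p_k)x − a₃‖x‖².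 Then there exist symmetric positive-definite matrices S̄_i ∈ ℝ^{n_x×n_x}, i = 1,…,N, such that S̄_j − A_iS̄_iA_iᵀ + BBᵀ ≻ 0 for all i,j ∈ {1,…,N}. -/
/-!
At a vertex `π i` the weights single out `Pbar i` and `A i`, so the hypotheses, read along
sequences that sit at `π i` and then jump to `π j`, say that `Pbar i` is positive definite and
that the closed loop `M = A i + B K` satisfies `Mᵀ Pbar j M ≤ μ Pbar i` with `μ = 1 - a₃ / a₂ < 1`.
Dualising gives `M (Pbar i)⁻¹ Mᵀ ≤ (2 - μ)⁻¹ (Pbar j)⁻¹`. Writing `(A i)ᵀ = Mᵀ - Kᵀ Bᵀ` and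
applying Young's inequality, `S i = t (Pbar i)⁻¹` satisfies the vertex inequalities for all small
`t > 0`: the gain term is `t` times a quadratic form in `Bᵀ y`, absorbed by `B Bᵀ`, while the rest
keeps a margin proportional to `t`.
-/

open Matrix Filter Topology

namespace Matrix

variable {n m : Type*} [Fintype n] [Fintype m]

lemma IsSymm.dotProduct_mulVec_comm {α : Type*} [CommSemiring α] {M : Matrix n n α}
    (hM : M.IsSymm) (v w : n → α) : v ⬝ᵥ M *ᵥ w = w ⬝ᵥ M *ᵥ v := by
  rw [dotProduct_mulVec, ← mulVec_transpose, hM.eq, dotProduct_comm]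

lemma IsSymm.dotProduct_mulVec_eq {α : Type*} [CommSemiring α] {M : Matrix n n α}
    (hM : M.IsSymm) (v w : n → α) : v ⬝ᵥ M *ᵥ w = (M *ᵥ v) ⬝ᵥ w := by
  rw [dotProduct_mulVec, ← mulVec_transpose, hM.eq]

lemma PosSemidef.dotProduct_mulVec_self_nonneg {Q : Matrix n n ℝ} (hQ : Q.PosSemidef)
    (x : n → ℝ) : 0 ≤ x ⬝ᵥ Q *ᵥ x := by
  simpa using hQ.dotProduct_mulVec_nonneg x

lemma PosSemidef.two_mul_dotProduct_mulVec_le {Q : Matrix n n ℝ} (hQ : Q.PosSemidef)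
    (a b : n → ℝ) {s : ℝ} (hs : 0 < s) :
    2 * (a ⬝ᵥ Q *ᵥ b) ≤ s * (a ⬝ᵥ Q *ᵥ a) + s⁻¹ * (b ⬝ᵥ Q *ᵥ b) := by
  have hsq := hQ.dotProduct_mulVec_self_nonneg (s • a - b)
  have hba := (isHermitian_iff_isSymm.mp hQ.isHermitian).dotProduct_mulVec_comm b a
  simp only [mulVec_sub, mulVec_smul, dotProduct_sub, sub_dotProduct, dotProduct_smul,
    smul_dotProduct, smul_eq_mul, hba] at hsq
  have hinv : s * (s⁻¹ * (b ⬝ᵥ Q *ᵥ b)) = b ⬝ᵥ Q *ᵥ b := by field_simp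
  rw [← mul_le_mul_iff_right₀ hs, mul_add, hinv]
  linarith

lemma PosSemidef.dotProduct_mulVec_sub_le {Q : Matrix n n ℝ} (hQ : Q.PosSemidef)
    (u r : n → ℝ) {s : ℝ} (hs : 0 < s) :
    (u - r) ⬝ᵥ Q *ᵥ (u - r) ≤ (1 + s) * (u ⬝ᵥ Q *ᵥ u) + (1 + s⁻¹) * (r ⬝ᵥ Q *ᵥ r) := by
  have hcross := hQ.two_mul_dotProduct_mulVec_le u (-r) hs
  have hru := (isHermitian_iff_isSymm.mp hQ.isHermitian).dotProduct_mulVec_comm r u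
  simp only [mulVec_neg, dotProduct_neg, neg_dotProduct, neg_neg] at hcross
  simp only [mulVec_sub, dotProduct_sub, sub_dotProduct, hru]
  linarith

lemma exists_dotProduct_mulVec_le (M : Matrix n n ℝ) :
    ∃ C, ∀ x : n → ℝ, x ⬝ᵥ M *ᵥ x ≤ C * (x ⬝ᵥ x) := by
  refine ⟨∑ i, ∑ j, |M i j|, fun x => ?_⟩
  have hsq (i : n) : x i ^ 2 ≤ x ⬝ᵥ x := by
    simpa [dotProduct, sq] using
      Finset.single_le_sum (fun j _ => mul_self_nonneg (x j)) (Finset.mem_univ i)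
  have hterm (i j : n) : x i * (M i j * x j) ≤ |M i j| * (x ⬝ᵥ x) := by
    have hij : |x i| * |x j| ≤ x ⬝ᵥ x := by
      nlinarith [hsq i, hsq j, sq_abs (x i), sq_abs (x j), sq_nonneg (|x i| - |x j|)]
    calc x i * (M i j * x j) ≤ |x i * (M i j * x j)| := le_abs_self _
      _ = |M i j| * (|x i| * |x j|) := by rw [abs_mul, abs_mul]; ring
      _ ≤ |M i j| * (x ⬝ᵥ x) := mul_le_mul_of_nonneg_left hij (abs_nonneg _)
  calc x ⬝ᵥ M *ᵥ x = ∑ i, ∑ j, x i * (M i j * x j) := by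
        simp only [dotProduct, mulVec, Finset.mul_sum]
    _ ≤ ∑ i, ∑ j, |M i j| * (x ⬝ᵥ x) :=
        Finset.sum_le_sum fun i _ => Finset.sum_le_sum fun j _ => hterm i j
    _ = (∑ i, ∑ j, |M i j|) * (x ⬝ᵥ x) := by simp only [Finset.sum_mul]

lemma PosDef.mulVec_inv_mulVec [DecidableEq n] {P : Matrix n n ℝ} (hP : P.PosDef) (v : n → ℝ) :
    P *ᵥ (P⁻¹ *ᵥ v) = v := by
  rw [mulVec_mulVec, mul_nonsing_inv _ (P.isUnit_iff_isUnit_det.mp hP.isUnit), one_mulVec]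

lemma dual_lyapunov_decrease [DecidableEq n] {P P' M : Matrix n n ℝ} (hP : P.PosDef)
    (hP' : P'.PosDef) {μ : ℝ} (hμ : μ < 2)
    (hdec : ∀ x, (M *ᵥ x) ⬝ᵥ P' *ᵥ (M *ᵥ x) ≤ μ * (x ⬝ᵥ P *ᵥ x)) (y : n → ℝ) :
    (Mᵀ *ᵥ y) ⬝ᵥ P⁻¹ *ᵥ (Mᵀ *ᵥ y) ≤ (2 - μ)⁻¹ * (y ⬝ᵥ P'⁻¹ *ᵥ y) := by
  have hP'symm : P'.IsSymm := isHermitian_iff_isSymm.mp hP'.isHermitian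
  set x := P⁻¹ *ᵥ (Mᵀ *ᵥ y)
  set w := P'⁻¹ *ᵥ y
  have hxPx : x ⬝ᵥ P *ᵥ x = (Mᵀ *ᵥ y) ⬝ᵥ x := by
    rw [hP.mulVec_inv_mulVec, dotProduct_comm]
  have hwPMx : w ⬝ᵥ P' *ᵥ (M *ᵥ x) = (Mᵀ *ᵥ y) ⬝ᵥ x := by
    rw [hP'symm.dotProduct_mulVec_eq, hP'.mulVec_inv_mulVec, dotProduct_mulVec,
      ← mulVec_transpose]
  have hwPw : w ⬝ᵥ P' *ᵥ w = y ⬝ᵥ w := by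
    rw [hP'symm.dotProduct_mulVec_eq, hP'.mulVec_inv_mulVec]
  -- `(Mᵀ y) ⬝ x` is the `P'`-pairing of `w` and `M x`; bound it by the two `P'`-forms.
  have hamgm := hP'.posSemidef.two_mul_dotProduct_mulVec_le w (M *ᵥ x) one_pos
  rw [hwPMx, hwPw, inv_one, one_mul, one_mul] at hamgm
  have hdecx := hdec x
  rw [hxPx] at hdecx
  rw [le_inv_mul_iff₀ (by linarith)]
  linarith

lemma eventually_posDef_lmi {Q Q' A : Matrix n n ℝ} {B : Matrix n m ℝ} {K : Matrix m n ℝ}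
    (hQ : Q.PosSemidef) (hQ' : Q'.PosDef) {κ : ℝ} (hκ : κ < 1)
    (hdual : ∀ y, ((A + B * K)ᵀ *ᵥ y) ⬝ᵥ Q *ᵥ ((A + B * K)ᵀ *ᵥ y) ≤ κ * (y ⬝ᵥ Q' *ᵥ y)) :
    ∀ᶠ t in 𝓝[>] (0 : ℝ), (t • Q' - A * (t • Q) * Aᵀ + B * Bᵀ).PosDef := by
  obtain ⟨C, hC⟩ := exists_dotProduct_mulVec_le (K * Q * Kᵀ)
  -- `(1 + s) κ = 1 - s²`, so Young's inequality with `s = 1 - κ` leaves the margin `t s² yᵀQ'y`.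
  set s := 1 - κ
  have hs : 0 < s := sub_pos.mpr hκ
  have hsmall : ∀ᶠ t in 𝓝[>] (0 : ℝ), t * ((1 + s⁻¹) * C) < 1 := by
    have hlim : Tendsto (fun t : ℝ => t * ((1 + s⁻¹) * C)) (𝓝 0) (𝓝 0) := by
      simpa using (tendsto_id (x := 𝓝 (0 : ℝ))).mul_const ((1 + s⁻¹) * C)
    exact eventually_nhdsWithin_of_eventually_nhds (hlim.eventually (gt_mem_nhds one_pos))
  filter_upwards [hsmall, self_mem_nhdsWithin] with t ht (htpos : 0 < t)
  refine .of_dotProduct_mulVec_pos ?_ fun y hy => ?_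
  · refine .add (.sub ?_ ?_) (by simpa using isHermitian_mul_conjTranspose_self B)
    · exact hQ'.isHermitian.smul (IsSelfAdjoint.all t)
    · simpa using isHermitian_mul_mul_conjTranspose A (hQ.isHermitian.smul (IsSelfAdjoint.all t))
  set z := Bᵀ *ᵥ y
  set u := (A + B * K)ᵀ *ᵥ y
  have hAy : Aᵀ *ᵥ y = u - Kᵀ *ᵥ z := by
    simp only [u, z, transpose_add, transpose_mul, add_mulVec, mulVec_mulVec, add_sub_cancel_right]
  have hform : y ⬝ᵥ (t • Q' - A * (t • Q) * Aᵀ + B * Bᵀ) *ᵥ y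
      = t * (y ⬝ᵥ Q' *ᵥ y) - t * ((u - Kᵀ *ᵥ z) ⬝ᵥ Q *ᵥ (u - Kᵀ *ᵥ z)) + z ⬝ᵥ z := by
    simp only [add_mulVec, sub_mulVec, ← mulVec_mulVec, dotProduct_add, dotProduct_sub,
      smul_mulVec, dotProduct_smul, smul_eq_mul]
    rw [dotProduct_mulVec y A, ← mulVec_transpose, hAy, dotProduct_mulVec y B,
      ← mulVec_transpose, dotProduct_smul, smul_eq_mul]
  have hyoung := hQ.dotProduct_mulVec_sub_le u (Kᵀ *ᵥ z) hs
  have hKz : (Kᵀ *ᵥ z) ⬝ᵥ Q *ᵥ (Kᵀ *ᵥ z) ≤ C * (z ⬝ᵥ z) := by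
    have hKQK := hC z
    rwa [← mulVec_mulVec, ← mulVec_mulVec, dotProduct_mulVec z K, ← mulVec_transpose] at hKQK
  have hq : 0 < y ⬝ᵥ Q' *ᵥ y := by simpa using hQ'.dotProduct_mulVec_pos hy
  have hz : 0 ≤ z ⬝ᵥ z := by simpa using dotProduct_star_self_nonneg z
  have hUq : t * ((1 + s) * (u ⬝ᵥ Q *ᵥ u)) ≤ t * (y ⬝ᵥ Q' *ᵥ y) - t * (y ⬝ᵥ Q' *ᵥ y) * s ^ 2 :=
    calc t * ((1 + s) * (u ⬝ᵥ Q *ᵥ u)) ≤ t * ((1 + s) * (κ * (y ⬝ᵥ Q' *ᵥ y))) := by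
          gcongr; exact hdual y
      _ = t * (y ⬝ᵥ Q' *ᵥ y) - t * (y ⬝ᵥ Q' *ᵥ y) * s ^ 2 := by ring
  have hRz : t * ((1 + s⁻¹) * ((Kᵀ *ᵥ z) ⬝ᵥ Q *ᵥ (Kᵀ *ᵥ z))) ≤ z ⬝ᵥ z :=
    calc t * ((1 + s⁻¹) * ((Kᵀ *ᵥ z) ⬝ᵥ Q *ᵥ (Kᵀ *ᵥ z)))
        ≤ t * ((1 + s⁻¹) * (C * (z ⬝ᵥ z))) := by gcongr
      _ = t * ((1 + s⁻¹) * C) * (z ⬝ᵥ z) := by ring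
      _ ≤ z ⬝ᵥ z := mul_le_of_le_one_left hz ht.le
  have hmargin : 0 < t * (y ⬝ᵥ Q' *ᵥ y) * s ^ 2 := by positivity
  rw [star_trivial, hform]
  linarith [mul_le_mul_of_nonneg_left hyoung htpos.le]

theorem exists_posDef_vertex_lmi [DecidableEq n] {ι : Type*} [Finite ι]
    (A : ι → Matrix n n ℝ) (B : Matrix n m ℝ) {P : ι → Matrix n n ℝ} (hP : ∀ i, (P i).PosDef)
    {μ : ℝ} (hμ : μ < 1)
    (hdec : ∀ i j, ∃ K : Matrix m n ℝ, ∀ x,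
      ((A i + B * K) *ᵥ x) ⬝ᵥ P j *ᵥ ((A i + B * K) *ᵥ x) ≤ μ * (x ⬝ᵥ P i *ᵥ x)) :
    ∃ S : ι → Matrix n n ℝ, (∀ i, (S i).PosDef) ∧
      ∀ i j, (S j - A i * S i * (A i)ᵀ + B * Bᵀ).PosDef := by
  have hκ : (2 - μ)⁻¹ < 1 := inv_lt_one_of_one_lt₀ (by linarith)
  have hlmi (i j : ι) : ∀ᶠ t in 𝓝[>] (0 : ℝ),
      (t • (P j)⁻¹ - A i * (t • (P i)⁻¹) * (A i)ᵀ + B * Bᵀ).PosDef := by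
    obtain ⟨K, hK⟩ := hdec i j
    exact eventually_posDef_lmi (hP i).inv.posSemidef (hP j).inv hκ
      (dual_lyapunov_decrease (hP i) (hP j) (by linarith) hK)
  obtain ⟨t, ht, htpos⟩ :=
    ((eventually_all.2 fun i => eventually_all.2 (hlmi i)).and self_mem_nhdsWithin).exists
  exact ⟨fun i => t • (P i)⁻¹, fun i => (hP i).inv.smul htpos, ht⟩

end Matrix

theorem stmt_8_general {np nx nu N : ℕ} (Pset : Set (Fin np → ℝ))
    (ξ : Fin N → (Fin np → ℝ) → ℝ)
    (A : Fin N → Matrix (Fin nx) (Fin nx) ℝ)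
    (B : Matrix (Fin nx) (Fin nu) ℝ)
    (hstrict : ∀ i, ∃ π ∈ Pset, ∀ j, ξ j π = if j = i then 1 else 0)
    (K : ℕ → (ℕ → (Fin np → ℝ)) → Matrix (Fin nu) (Fin nx) ℝ)
    (Pbar : Fin N → Matrix (Fin nx) (Fin nx) ℝ)
    (hPsym : ∀ i, (Pbar i).IsSymm)
    (a₁ a₂ a₃ : ℝ) (ha₁ : 0 < a₁) (ha₂ : 0 < a₂) (ha₃ : 0 < a₃)
    (hbounds : ∀ p : ℕ → (Fin np → ℝ), (∀ k, p k ∈ Pset) → ∀ (k : ℕ) (x : Fin nx → ℝ),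
      a₁ * (x ⬝ᵥ x) ≤ x ⬝ᵥ ((∑ i, ξ i (p k) • Pbar i) *ᵥ x) ∧
      x ⬝ᵥ ((∑ i, ξ i (p k) • Pbar i) *ᵥ x) ≤ a₂ * (x ⬝ᵥ x))
    (hdec : ∀ p : ℕ → (Fin np → ℝ), (∀ k, p k ∈ Pset) → ∀ (k : ℕ) (x : Fin nx → ℝ),
      ((((∑ i, ξ i (p k) • A i) + B * K k p) *ᵥ x) ⬝ᵥ
          ((∑ i, ξ i (p (k + 1)) • Pbar i) *ᵥ (((∑ i, ξ i (p k) • A i) + B * K k p) *ᵥ x)))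
        ≤ x ⬝ᵥ ((∑ i, ξ i (p k) • Pbar i) *ᵥ x) - a₃ * (x ⬝ᵥ x)) :
    ∃ Sbar : Fin N → Matrix (Fin nx) (Fin nx) ℝ,
      (∀ i, (Sbar i).PosDef) ∧
      ∀ i j, (Sbar j - A i * Sbar i * (A i)ᵀ + B * Bᵀ).PosDef := by
  choose π hπ hvertex using hstrict
  have hsum_vertex (X : Fin N → Matrix (Fin nx) (Fin nx) ℝ) (i : Fin N) :
      ∑ j, ξ j (π i) • X j = X i := by
    simp [hvertex i]
  have hbounds_vertex (i : Fin N) (x : Fin nx → ℝ) :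
      a₁ * (x ⬝ᵥ x) ≤ x ⬝ᵥ Pbar i *ᵥ x ∧ x ⬝ᵥ Pbar i *ᵥ x ≤ a₂ * (x ⬝ᵥ x) := by
    simpa only [hsum_vertex] using hbounds (fun _ => π i) (fun _ => hπ i) 0 x
  have hPpos (i : Fin N) : (Pbar i).PosDef := by
    refine .of_dotProduct_mulVec_pos (isHermitian_iff_isSymm.mpr (hPsym i)) fun x hx => ?_
    have hxx : 0 < x ⬝ᵥ x := by simpa using dotProduct_star_self_pos_iff.mpr hx
    simpa using (mul_pos ha₁ hxx).trans_le (hbounds_vertex i x).1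
  refine exists_posDef_vertex_lmi A B hPpos (μ := 1 - a₃ / a₂) (by linarith [div_pos ha₃ ha₂])
    fun i j => ⟨K 0 fun k => if k = 0 then π i else π j, fun x => ?_⟩
  have hstep := hdec (fun k => if k = 0 then π i else π j) (fun k => by split_ifs <;> apply hπ) 0 x
  simp only [zero_add, one_ne_zero, ↓reduceIte, hsum_vertex] at hstep
  have hupper : a₃ / a₂ * (x ⬝ᵥ Pbar i *ᵥ x) ≤ a₃ * (x ⬝ᵥ x) := by
    calc a₃ / a₂ * (x ⬝ᵥ Pbar i *ᵥ x) ≤ a₃ / a₂ * (a₂ * (x ⬝ᵥ x)) := by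
          gcongr; exact (hbounds_vertex i x).2
      _ = a₃ * (x ⬝ᵥ x) := by field_simp
  linarith

/-- Corollary 1: If the strictly polytopic system is poly-Q stabilizable
(there is a feedback gain `K(k,p)` and a poly-quadratic Lyapunov function
`V(π,x) = xᵀP(π)x` for the closed loop `x₊ = (A(p_k) + BK(k,p))x`), then there exist
symmetric positive definite `S̄ᵢ` with `S̄ⱼ − AᵢS̄ᵢAᵢᵀ + BBᵀ ≻ 0` for all `i, j`. -/
theorem stmt_8 {np nx nu N : ℕ} (Pset : Set (Fin np → ℝ)) (hcomp : IsCompact Pset)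
    (ξ : Fin N → (Fin np → ℝ) → ℝ)
    (hcont : ∀ i, ContinuousOn (ξ i) Pset)
    (hnonneg : ∀ i, ∀ π ∈ Pset, 0 ≤ ξ i π)
    (hsum : ∀ π ∈ Pset, ∑ i, ξ i π = 1)
    (A : Fin N → Matrix (Fin nx) (Fin nx) ℝ)
    (B : Matrix (Fin nx) (Fin nu) ℝ)
    (hstrict : ∀ i, ∃ π ∈ Pset, ∀ j, ξ j π = if j = i then 1 else 0)
    (K : ℕ → (ℕ → (Fin np → ℝ)) → Matrix (Fin nu) (Fin nx) ℝ)
    (Pbar : Fin N → Matrix (Fin nx) (Fin nx) ℝ)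
    (hPsym : ∀ i, (Pbar i).IsSymm)
    (a₁ a₂ a₃ : ℝ) (ha₁ : 0 < a₁) (ha₂ : 0 < a₂) (ha₃ : 0 < a₃)
    (hbounds : ∀ p : ℕ → (Fin np → ℝ), (∀ k, p k ∈ Pset) → ∀ (k : ℕ) (x : Fin nx → ℝ),
      a₁ * (x ⬝ᵥ x) ≤ x ⬝ᵥ ((∑ i, ξ i (p k) • Pbar i) *ᵥ x) ∧
      x ⬝ᵥ ((∑ i, ξ i (p k) • Pbar i) *ᵥ x) ≤ a₂ * (x ⬝ᵥ x))
    (hdec : ∀ p : ℕ → (Fin np → ℝ), (∀ k, p k ∈ Pset) → ∀ (k : ℕ) (x : Fin nx → ℝ),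
      ((((∑ i, ξ i (p k) • A i) + B * K k p) *ᵥ x) ⬝ᵥ
          ((∑ i, ξ i (p (k + 1)) • Pbar i) *ᵥ (((∑ i, ξ i (p k) • A i) + B * K k p) *ᵥ x)))
        ≤ x ⬝ᵥ ((∑ i, ξ i (p k) • Pbar i) *ᵥ x) - a₃ * (x ⬝ᵥ x)) :
    ∃ Sbar : Fin N → Matrix (Fin nx) (Fin nx) ℝ,
      (∀ i, (Sbar i).PosDef) ∧
      ∀ i j, (Sbar j - A i * Sbar i * (A i)ᵀ + B * Bᵀ).PosDef :=
  stmt_8_general Pset ξ A B hstrict K Pbar hPsym a₁ a₂ a₃ ha₁ ha₂ ha₃ hbounds hdec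
end

section
/- Let Ψ be a real symmetric n×n matrix, Γ a real m×n matrix and Ω a real p×n matrix. There exists a real m×p matrix Λ such that Ψ + ΓᵀΛΩ + ΩᵀΛᵀΓ ≻ 0 if and only if both of the following hold: xᵀΨx > 0 for every nonzero x in the kernel of Γ, and xᵀΨx > 0 for every nonzero x in the kernel of Ω. -/
open Matrix

/-! Necessity: on `ker Γ ∪ ker Ω` the cross terms `xᵀΓᵀΛΩx` vanish.

Sufficiency: `Ψ` is positive definite on `M = ker Γ ⊓ ker Ω`, so `ℝⁿ = M ⊕ N` with `N`
`Ψ`-orthogonal to `M`. Splitting further `N = (ker Γ ⊓ N) ⊕ (ker Ω ⊓ N) ⊕ C` with `C`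
complementary to `ker Γ ⊔ ker Ω` writes `x = a + b + c + d`. The maps `x ↦ b`, `x ↦ c`, `x ↦ d`
vanish on `ker Ω`, `ker Γ` and both, so they factor through `Ω`, `Γ` and both; this lets `Λ` be
chosen so that the quadratic form of `Ψ + ΓᵀΛΩ + ΩᵀΛᵀΓ` becomes `aᵀΨa + bᵀΨb + cᵀΨc + dᵀd`,
which is positive unless `x = 0`. -/

section ModularLattice

variable {α : Type*} [Lattice α] [BoundedOrder α] [IsModularLattice α] {a b n r : α}

theorem sup_inf_sup_eq_left_of_disjoint (h : Disjoint (a ⊔ b) r) : (a ⊔ r) ⊓ (a ⊔ b) = a := by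
  rw [sup_inf_assoc_of_le r le_sup_left, inf_comm, h.eq_bot, sup_bot_eq]

theorem isCompl_inf_sup_of_isCompl (hn : IsCompl (a ⊓ b) n) (hr : IsCompl (a ⊔ b) r) :
    IsCompl (a ⊓ n) (b ⊔ r) := by
  have hab : a ⊔ b = a ⊓ n ⊔ b := by
    refine le_antisymm (sup_le ?_ le_sup_right) (sup_le_sup_right inf_le_left b)
    calc a = (a ⊓ b ⊔ n) ⊓ a := by rw [hn.sup_eq_top, top_inf_eq]
      _ = a ⊓ b ⊔ n ⊓ a := sup_inf_assoc_of_le n inf_le_left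
      _ ≤ a ⊓ n ⊔ b := sup_le (inf_le_right.trans le_sup_right) (inf_comm n a ▸ le_sup_left)
  have hdisj : Disjoint (a ⊓ n) b := by
    rw [disjoint_iff, inf_right_comm, hn.inf_eq_bot]
  exact hdisj.isCompl_sup_right_of_isCompl_sup_left (hab ▸ hr)

end ModularLattice

theorem LinearMap.exists_comp_eq_of_ker_le {𝕜 V W U : Type*} [Field 𝕜] [AddCommGroup V]
    [Module 𝕜 V] [AddCommGroup W] [Module 𝕜 W] [AddCommGroup U] [Module 𝕜 U]
    (f : V →ₗ[𝕜] W) {g : V →ₗ[𝕜] U} (hfg : ker f ≤ ker g) : ∃ h : W →ₗ[𝕜] U, h ∘ₗ f = g := by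
  obtain ⟨s, hs⟩ := f.rangeRestrict.exists_rightInverse_of_surjective f.range_rangeRestrict
  obtain ⟨h, hh⟩ := LinearMap.exists_extend (g ∘ₗ s)
  refine ⟨h, LinearMap.ext fun x => ?_⟩
  have hsx : s (f.rangeRestrict x) - x ∈ ker f := by
    rw [mem_ker, map_sub, sub_eq_zero]
    exact congr(Subtype.val ($hs (f.rangeRestrict x)))
  calc h (f x) = g (s (f.rangeRestrict x)) := congr($hh (f.rangeRestrict x))
    _ = g x := sub_eq_zero.mp (by rw [← map_sub]; exact hfg hsx)

theorem Matrix.IsSymm.add_transpose_mul_mul {𝕜 m n p : Type*} [CommSemiring 𝕜] [Fintype m]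
    [Fintype p] {Ψ : Matrix n n 𝕜} (hΨ : Ψ.IsSymm) (Γ : Matrix m n 𝕜) (Λ : Matrix m p 𝕜)
    (Ω : Matrix p n 𝕜) :
    (Ψ + Γᵀ * Λ * Ω + Ωᵀ * Λᵀ * Γ).IsSymm := by
  simp only [IsSymm, transpose_add, transpose_mul, transpose_transpose, hΨ.eq, Matrix.mul_assoc]
  abel

section Matrix

variable {𝕜 m n p : Type*} [Fintype m] [Fintype n] [Fintype p]

theorem Matrix.exists_mul_eq_of_mulVec_eq_zero [Field 𝕜] [DecidableEq m] [DecidableEq n]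
    {k : Type*} (Γ : Matrix m n 𝕜) {A : Matrix k n 𝕜} (h : ∀ x, Γ *ᵥ x = 0 → A *ᵥ x = 0) :
    ∃ S : Matrix k m 𝕜, S * Γ = A := by
  obtain ⟨g, hg⟩ := (toLin' Γ).exists_comp_eq_of_ker_le (g := toLin' A) fun x hx => h x hx
  exact ⟨LinearMap.toMatrix' g, toLin'.injective (by rw [toLin'_mul, toLin'_toMatrix', hg])⟩

theorem IsCompl.exists_matrix_projection [Field 𝕜] [DecidableEq n]
    {U W : Submodule 𝕜 (n → 𝕜)} (h : IsCompl U W) :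
    ∃ P : Matrix n n 𝕜, ∀ x, P *ᵥ x ∈ U ∧ x - P *ᵥ x ∈ W ∧ (x ∈ W → P *ᵥ x = 0) := by
  refine ⟨LinearMap.toMatrix' (U.projection W h), fun x => ?_⟩
  rw [LinearMap.toMatrix'_mulVec]
  exact ⟨U.projection_apply_mem h x,
    Submodule.projection_eq_self_sub_projection h x ▸ W.projection_apply_mem h.symm x,
    U.projection_apply_of_mem_right h⟩

theorem Matrix.IsSymm.dotProduct_mulVec_comm_s12 [CommSemiring 𝕜] {Ψ : Matrix n n 𝕜}
    (hΨ : Ψ.IsSymm) (u v : n → 𝕜) : u ⬝ᵥ Ψ *ᵥ v = v ⬝ᵥ Ψ *ᵥ u := by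
  rw [dotProduct_mulVec, ← mulVec_transpose, hΨ.eq, dotProduct_comm]

theorem Matrix.IsSymm.exists_isCompl_dotProduct_mulVec_eq_zero [Field 𝕜] [DecidableEq n]
    {Ψ : Matrix n n 𝕜} (hΨ : Ψ.IsSymm) {W : Submodule 𝕜 (n → 𝕜)}
    (hW : ∀ x ∈ W, x ⬝ᵥ Ψ *ᵥ x = 0 → x = 0) :
    ∃ N, IsCompl W N ∧ ∀ x ∈ W, ∀ y ∈ N, x ⬝ᵥ Ψ *ᵥ y = 0 := by
  have hB : (toBilin' Ψ).IsRefl := (isSymm_toBilin'_iff_isSymm.2 hΨ).isRefl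
  refine ⟨(toBilin' Ψ).orthogonal W, (LinearMap.BilinForm.isCompl_orthogonal_iff_disjoint hB).2 ?_,
    fun x hx y hy => by simpa [toBilin'_apply'] using hy x hx⟩
  refine Submodule.disjoint_def.2 fun x hx hxo => hW x hx ?_
  simpa [toBilin'_apply'] using hxo x hx

open Submodule in
/-- `P`, `Q`, `R` project onto the last three summands of `(U ⊓ W) ⊕ (U ⊓ N) ⊕ (W ⊓ N) ⊕ C`,
where `N` is a `Ψ`-orthogonal complement of `U ⊓ W` and `C ≤ N` a complement of `U ⊔ W`. -/
theorem Matrix.IsSymm.exists_elimination_projections [Field 𝕜] [DecidableEq n]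
    {Ψ : Matrix n n 𝕜} (hΨ : Ψ.IsSymm) {U W : Submodule 𝕜 (n → 𝕜)}
    (hUW : ∀ x ∈ U ⊓ W, x ⬝ᵥ Ψ *ᵥ x = 0 → x = 0) :
    ∃ P Q R : Matrix n n 𝕜, ∀ x,
      (x ∈ W → P *ᵥ x = 0) ∧ (x ∈ U → Q *ᵥ x = 0) ∧ (x ∈ U ⊔ W → R *ᵥ x = 0) ∧
      P *ᵥ x ∈ U ∧ Q *ᵥ x ∈ W ∧ x - P *ᵥ x - Q *ᵥ x - R *ᵥ x ∈ U ⊓ W ∧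
      (x - P *ᵥ x - Q *ᵥ x - R *ᵥ x) ⬝ᵥ Ψ *ᵥ (P *ᵥ x + Q *ᵥ x + R *ᵥ x) = 0 := by
  obtain ⟨N, hN, horth⟩ := hΨ.exists_isCompl_dotProduct_mulVec_eq_zero hUW
  obtain ⟨C, hCN, hC⟩ := (hN.codisjoint.mono_left inf_le_sup).symm.exists_isCompl
  obtain ⟨P, hP⟩ := (isCompl_inf_sup_of_isCompl hN hC.symm).exists_matrix_projection
  obtain ⟨Q, hQ⟩ := (isCompl_inf_sup_of_isCompl (inf_comm U W ▸ hN)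
    (sup_comm U W ▸ hC.symm)).exists_matrix_projection
  obtain ⟨R, hR⟩ := hC.exists_matrix_projection
  refine ⟨P, Q, R, fun x => ?_⟩
  obtain ⟨hPx, hxP, hP0⟩ := hP x
  obtain ⟨hQx, hxQ, hQ0⟩ := hQ x
  obtain ⟨hRx, hxR, hR0⟩ := hR x
  have hU : x - P *ᵥ x - Q *ᵥ x - R *ᵥ x ∈ (U ⊔ C) ⊓ (U ⊔ W) := by
    refine mem_inf.2 ⟨?_, ?_⟩
    · convert sub_mem (sub_mem hxQ (mem_sup_left hPx.1)) (mem_sup_right hRx) using 1; abel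
    · convert sub_mem (sub_mem hxR (mem_sup_left hPx.1)) (mem_sup_right hQx.1) using 1; abel
  have hW : x - P *ᵥ x - Q *ᵥ x - R *ᵥ x ∈ (W ⊔ C) ⊓ (W ⊔ U) := by
    refine mem_inf.2 ⟨?_, ?_⟩
    · exact sub_mem (sub_mem hxP (mem_sup_left hQx.1)) (mem_sup_right hRx)
    · convert sub_mem (sub_mem (sup_comm U W ▸ hxR) (mem_sup_right hPx.1)) (mem_sup_left hQx.1)
        using 1; abel
  rw [sup_inf_sup_eq_left_of_disjoint hC.symm.disjoint] at hU
  rw [sup_inf_sup_eq_left_of_disjoint (sup_comm U W ▸ hC.symm.disjoint)] at hW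
  exact ⟨fun hx => hP0 (mem_sup_left hx), fun hx => hQ0 (mem_sup_left hx), hR0,
    hPx.1, hQx.1, ⟨hU, hW⟩, horth _ ⟨hU, hW⟩ _ (add_mem (add_mem hPx.2 hQx.2) (hCN hRx))⟩

theorem Matrix.dotProduct_transpose_mul_mul_mulVec [CommSemiring 𝕜] {k l : Type*} [Fintype k]
    [Fintype l] (A : Matrix k m 𝕜) (C : Matrix k l 𝕜) (B : Matrix l n 𝕜) (x : m → 𝕜)
    (y : n → 𝕜) : x ⬝ᵥ (Aᵀ * C * B) *ᵥ y = (A *ᵥ x) ⬝ᵥ C *ᵥ B *ᵥ y := by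
  rw [← mulVec_mulVec, ← mulVec_mulVec, dotProduct_mulVec, vecMul_transpose]

theorem Matrix.dotProduct_add_transpose_mul_mul_mulVec [CommSemiring 𝕜] (Ψ : Matrix n n 𝕜)
    (Γ : Matrix m n 𝕜) (Λ : Matrix m p 𝕜) (Ω : Matrix p n 𝕜) (x : n → 𝕜) :
    x ⬝ᵥ (Ψ + Γᵀ * Λ * Ω + Ωᵀ * Λᵀ * Γ) *ᵥ x = x ⬝ᵥ Ψ *ᵥ x + 2 * (Γ *ᵥ x) ⬝ᵥ Λ *ᵥ Ω *ᵥ x := by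
  rw [add_mulVec, add_mulVec, dotProduct_add, dotProduct_add,
    dotProduct_transpose_mul_mul_mulVec, dotProduct_transpose_mul_mul_mulVec,
    dotProduct_mulVec (Ω *ᵥ x), vecMul_transpose, dotProduct_comm (Λ *ᵥ _)]
  ring

theorem Matrix.IsSymm.dotProduct_mulVec_add_add_add [CommRing 𝕜] [DecidableEq n]
    {Ψ : Matrix n n 𝕜} (hΨ : Ψ.IsSymm) (a b c d : n → 𝕜) (h : a ⬝ᵥ Ψ *ᵥ (b + c + d) = 0) :
    (a + b + c + d) ⬝ᵥ Ψ *ᵥ (a + b + c + d) + d ⬝ᵥ (Ψ + 1) *ᵥ d - 2 * (c + d) ⬝ᵥ Ψ *ᵥ (b + d) =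
      a ⬝ᵥ Ψ *ᵥ a + b ⬝ᵥ Ψ *ᵥ b + c ⬝ᵥ Ψ *ᵥ c + d ⬝ᵥ d := by
  simp only [mulVec_add, add_mulVec, one_mulVec, dotProduct_add, add_dotProduct] at h ⊢
  linear_combination 2 * h + hΨ.dotProduct_mulVec_comm_s12 b a + hΨ.dotProduct_mulVec_comm_s12 c a
    + hΨ.dotProduct_mulVec_comm_s12 d a - hΨ.dotProduct_mulVec_comm_s12 c b
    - hΨ.dotProduct_mulVec_comm_s12 d b - hΨ.dotProduct_mulVec_comm_s12 c d

end Matrix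

section Elimination

variable {𝕜 m n p : Type*} [Fintype m] [DecidableEq m] [Fintype n] [DecidableEq n] [Fintype p]
  [DecidableEq p]

theorem Matrix.IsSymm.exists_dotProduct_mulVec_add_transpose_mul_mul_eq [Field 𝕜] [NeZero (2 : 𝕜)]
    {Ψ : Matrix n n 𝕜} (hΨ : Ψ.IsSymm) {Γ : Matrix m n 𝕜} {Ω : Matrix p n 𝕜} {P Q R : Matrix n n 𝕜}
    (hP : ∀ x, Ω *ᵥ x = 0 → P *ᵥ x = 0) (hQ : ∀ x, Γ *ᵥ x = 0 → Q *ᵥ x = 0)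
    (hRΓ : ∀ x, Γ *ᵥ x = 0 → R *ᵥ x = 0) (hRΩ : ∀ x, Ω *ᵥ x = 0 → R *ᵥ x = 0)
    (horth : ∀ x, (x - P *ᵥ x - Q *ᵥ x - R *ᵥ x) ⬝ᵥ Ψ *ᵥ (P *ᵥ x + Q *ᵥ x + R *ᵥ x) = 0) :
    ∃ Λ : Matrix m p 𝕜, ∀ x, x ⬝ᵥ (Ψ + Γᵀ * Λ * Ω + Ωᵀ * Λᵀ * Γ) *ᵥ x =
      (x - P *ᵥ x - Q *ᵥ x - R *ᵥ x) ⬝ᵥ Ψ *ᵥ (x - P *ᵥ x - Q *ᵥ x - R *ᵥ x) +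
        (P *ᵥ x) ⬝ᵥ Ψ *ᵥ (P *ᵥ x) + (Q *ᵥ x) ⬝ᵥ Ψ *ᵥ (Q *ᵥ x) + (R *ᵥ x) ⬝ᵥ (R *ᵥ x) := by
  obtain ⟨S, hS⟩ := Γ.exists_mul_eq_of_mulVec_eq_zero hRΓ
  obtain ⟨T, hT⟩ := Ω.exists_mul_eq_of_mulVec_eq_zero hRΩ
  obtain ⟨U, hU⟩ := Γ.exists_mul_eq_of_mulVec_eq_zero (A := Q + R) fun x hx => by
    rw [add_mulVec, hQ x hx, hRΓ x hx, add_zero]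
  obtain ⟨V, hV⟩ := Ω.exists_mul_eq_of_mulVec_eq_zero (A := P + R) fun x hx => by
    rw [add_mulVec, hP x hx, hRΩ x hx, add_zero]
  -- `2 (Γx)ᵀΛ(Ωx) = (Rx)ᵀ(Ψ + 1)(Rx) - 2 (Qx + Rx)ᵀΨ(Px + Rx)`
  refine ⟨(2⁻¹ : 𝕜) • (Sᵀ * (Ψ + 1) * T) - Uᵀ * Ψ * V, fun x => ?_⟩
  have hx : x = (x - P *ᵥ x - Q *ᵥ x - R *ᵥ x) + P *ᵥ x + Q *ᵥ x + R *ᵥ x := by abel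
  rw [dotProduct_add_transpose_mul_mul_mulVec, sub_mulVec, smul_mulVec, dotProduct_sub,
    dotProduct_smul, dotProduct_transpose_mul_mul_mulVec, dotProduct_transpose_mul_mul_mulVec,
    mulVec_mulVec (M := S), mulVec_mulVec (M := T), mulVec_mulVec (M := U),
    mulVec_mulVec (M := V), hS, hT, hU, hV, add_mulVec Q, add_mulVec P, smul_eq_mul,
    ← hΨ.dotProduct_mulVec_add_add_add _ _ _ _ (horth x), ← hx, mul_sub, ← mul_assoc,
    mul_inv_cancel₀ two_ne_zero, one_mul, add_sub_assoc]

open Submodule in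
theorem Matrix.IsSymm.exists_posDef_of_pos_of_mulVec_eq_zero {Ψ : Matrix n n ℝ} (hΨ : Ψ.IsSymm)
    {Γ : Matrix m n ℝ} {Ω : Matrix p n ℝ} (hΓ : ∀ x, x ≠ 0 → Γ *ᵥ x = 0 → 0 < x ⬝ᵥ Ψ *ᵥ x)
    (hΩ : ∀ x, x ≠ 0 → Ω *ᵥ x = 0 → 0 < x ⬝ᵥ Ψ *ᵥ x) :
    ∃ Λ : Matrix m p ℝ, (Ψ + Γᵀ * Λ * Ω + Ωᵀ * Λᵀ * Γ).PosDef := by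
  obtain ⟨P, Q, R, hPQR⟩ := hΨ.exists_elimination_projections
    (U := LinearMap.ker Γ.mulVecLin) (W := LinearMap.ker Ω.mulVecLin)
    fun x hx hx0 => by_contra fun hne => (hΓ x hne hx.1).ne' hx0
  obtain ⟨Λ, hΛ⟩ := hΨ.exists_dotProduct_mulVec_add_transpose_mul_mul_eq
    (fun x => (hPQR x).1) (fun x => (hPQR x).2.1) (fun x hx => (hPQR x).2.2.1 (mem_sup_left hx))
    (fun x hx => (hPQR x).2.2.1 (mem_sup_right hx)) fun x => (hPQR x).2.2.2.2.2.2
  refine ⟨Λ, PosDef.of_dotProduct_mulVec_pos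
    (isHermitian_iff_isSymm.2 (hΨ.add_transpose_mul_mul _ _ _)) fun x hx => ?_⟩
  obtain ⟨-, -, -, hPx, hQx, hrem, -⟩ := hPQR x
  rw [star_trivial, hΛ]
  set a := x - P *ᵥ x - Q *ᵥ x - R *ᵥ x
  have nonneg : ∀ y : n → ℝ, (y ≠ 0 → 0 < y ⬝ᵥ Ψ *ᵥ y) → 0 ≤ y ⬝ᵥ Ψ *ᵥ y := fun y hy => by
    rcases eq_or_ne y 0 with rfl | hy0
    · simp
    · exact (hy hy0).le
  have ha := fun h => hΓ a h hrem.1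
  have hb := fun h => hΓ (P *ᵥ x) h hPx
  have hc := fun h => hΩ (Q *ᵥ x) h hQx
  have hd : 0 ≤ R *ᵥ x ⬝ᵥ R *ᵥ x := by simpa using dotProduct_star_self_nonneg (R *ᵥ x)
  obtain h | h | h | h : a ≠ 0 ∨ P *ᵥ x ≠ 0 ∨ Q *ᵥ x ≠ 0 ∨ R *ᵥ x ≠ 0 := by
    contrapose! hx
    rw [show x = a + P *ᵥ x + Q *ᵥ x + R *ᵥ x by simp only [a]; abel, hx.1, hx.2.1, hx.2.2.1,
      hx.2.2.2, add_zero, add_zero, add_zero]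
  · linarith [ha h, nonneg _ hb, nonneg _ hc]
  · linarith [hb h, nonneg _ ha, nonneg _ hc]
  · linarith [hc h, nonneg _ ha, nonneg _ hb]
  · have : 0 < R *ᵥ x ⬝ᵥ R *ᵥ x := by simpa using dotProduct_star_self_pos_iff.2 h
    linarith [nonneg _ ha, nonneg _ hb, nonneg _ hc]

end Elimination

theorem Matrix.PosDef.dotProduct_mulVec_pos_of_mulVec_eq_zero {m n p : Type*} [Fintype m]
    [Fintype n] [Fintype p] {Ψ : Matrix n n ℝ} {Γ : Matrix m n ℝ} {Λ : Matrix m p ℝ}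
    {Ω : Matrix p n ℝ} (h : (Ψ + Γᵀ * Λ * Ω + Ωᵀ * Λᵀ * Γ).PosDef) {x : n → ℝ} (hx : x ≠ 0)
    (hΓΩ : Γ *ᵥ x = 0 ∨ Ω *ᵥ x = 0) : 0 < x ⬝ᵥ Ψ *ᵥ x := by
  have hpos := h.dotProduct_mulVec_pos hx
  rw [star_trivial, dotProduct_add_transpose_mul_mul_mulVec] at hpos
  rcases hΓΩ with h0 | h0 <;> simpa [h0] using hpos

/-- Projection/elimination lemma: For symmetric `Ψ`, there exists `Λ`
with `Ψ + ΓᵀΛΩ + ΩᵀΛᵀΓ ≻ 0` iff `Ψ` is positive definite on `ker Γ` and on `ker Ω`. -/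
theorem stmt_12 {n m p : ℕ} (Ψ : Matrix (Fin n) (Fin n) ℝ) (hΨ : Ψ.IsSymm)
    (Γ : Matrix (Fin m) (Fin n) ℝ) (Ω : Matrix (Fin p) (Fin n) ℝ) :
    (∃ Λ : Matrix (Fin m) (Fin p) ℝ, (Ψ + Γᵀ * Λ * Ω + Ωᵀ * Λᵀ * Γ).PosDef) ↔
      ((∀ x : Fin n → ℝ, x ≠ 0 → Γ *ᵥ x = 0 → 0 < x ⬝ᵥ (Ψ *ᵥ x)) ∧
       (∀ x : Fin n → ℝ, x ≠ 0 → Ω *ᵥ x = 0 → 0 < x ⬝ᵥ (Ψ *ᵥ x))) := by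
  refine ⟨fun ⟨Λ, hΛ⟩ => ⟨?_, ?_⟩, fun ⟨hΓ, hΩ⟩ => hΨ.exists_posDef_of_pos_of_mulVec_eq_zero hΓ hΩ⟩
  · exact fun x hx h0 => hΛ.dotProduct_mulVec_pos_of_mulVec_eq_zero hx (.inl h0)
  · exact fun x hx h0 => hΛ.dotProduct_mulVec_pos_of_mulVec_eq_zero hx (.inr h0)
end

section
/- Let ℙ ⊂ ℝ^{p} be a compact set, and let Ψ : ℙ → (real symmetric n×n matrices) and Γ : ℙ → ℝ^{m×n} be continuous. Then the following are equivalent: (i) for every π ∈ ℙ and every nonzero x ∈ ℝⁿ with Γ(π)x = 0 one has xᵀΨ(π)x > 0; (ii) there exists μ ∈ ℝ such that Ψ(π) + μΓ(π)ᵀΓ(π) ≻ 0 for all π ∈ ℙ. -/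
/-!
On the compact set `ℙ × S` (with `S` the unit sphere) the continuous functions
`f(π, x) = xᵀΨ(π)x` and `g(π, x) = ‖Γ(π)x‖² ≥ 0` satisfy `f > 0` wherever `g = 0`. The open sets
`{f + k g > 0}`, `k ∈ ℕ`, increase with `k` and cover `ℙ × S`, so by compactness a single one
already does; homogeneity of quadratic forms then extends positivity from `S` to all `x ≠ 0`.
-/

open Matrix Metric

theorem exists_nat_pos_add_mul {a b : ℝ} (hb : 0 ≤ b) (hab : b = 0 → 0 < a) :
    ∃ k : ℕ, 0 < a + k * b := by
  rcases hb.eq_or_lt with hb0 | hbpos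
  · exact ⟨0, by simpa using hab hb0.symm⟩
  · obtain ⟨k, hk⟩ := exists_nat_gt (-a / b)
    exact ⟨k, by linarith [(div_lt_iff₀ hbpos).mp hk]⟩

theorem exists_forall_pos_add_mul_of_compactSpace {X : Type*} [TopologicalSpace X]
    [CompactSpace X] {f g : X → ℝ} (hf : Continuous f) (hg : Continuous g) (hg0 : ∀ z, 0 ≤ g z)
    (hfg : ∀ z, g z = 0 → 0 < f z) : ∃ μ : ℝ, ∀ z, 0 < f z + μ * g z := by
  let U : ℕ → Set X := fun k => {z | 0 < f z + k * g z}
  have hU_open : ∀ k, IsOpen (U k) := fun k =>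
    isOpen_lt continuous_const (hf.add (continuous_const.mul hg))
  have hU_mono : Monotone U := fun k l hkl z (hz : 0 < f z + k * g z) =>
    show 0 < f z + l * g z from hz.trans_le (by gcongr; exact hg0 z)
  have hU_cover : Set.univ ⊆ ⋃ k, U k := fun z _ =>
    Set.mem_iUnion.mpr (exists_nat_pos_add_mul (hg0 z) (hfg z))
  obtain ⟨k, hk⟩ := isCompact_univ.elim_directed_cover U hU_open hU_cover hU_mono.directed_le
  exact ⟨k, fun z => hk (Set.mem_univ z)⟩

theorem IsCompact.exists_forall_pos_add_mul {X : Type*} [TopologicalSpace X] {K : Set X}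
    (hK : IsCompact K) {f g : X → ℝ} (hf : ContinuousOn f K) (hg : ContinuousOn g K)
    (hg0 : ∀ z ∈ K, 0 ≤ g z) (hfg : ∀ z ∈ K, g z = 0 → 0 < f z) :
    ∃ μ : ℝ, ∀ z ∈ K, 0 < f z + μ * g z := by
  have := isCompact_iff_compactSpace.mp hK
  obtain ⟨μ, hμ⟩ := exists_forall_pos_add_mul_of_compactSpace hf.domRestrict hg.domRestrict
    (fun z => hg0 z z.2) (fun z => hfg z z.2)
  exact ⟨μ, fun z hz => hμ ⟨z, hz⟩⟩

namespace Matrix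

variable {ι κ : Type*} [Fintype ι] [Fintype κ]

theorem dotProduct_mulVec_add_smul_transpose_mul {R : Type*} [CommRing R] (A : Matrix ι ι R)
    (B : Matrix κ ι R) (μ : R) (x : ι → R) :
    x ⬝ᵥ ((A + μ • (Bᵀ * B)) *ᵥ x) = x ⬝ᵥ (A *ᵥ x) + μ * ((B *ᵥ x) ⬝ᵥ (B *ᵥ x)) := by
  rw [add_mulVec, dotProduct_add, smul_mulVec, dotProduct_smul, ← mulVec_mulVec,
    dotProduct_mulVec x Bᵀ, vecMul_transpose, smul_eq_mul]

theorem dotProduct_mulVec_smul_self {R : Type*} [CommRing R] (M : Matrix ι ι R) (c : R)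
    (x : ι → R) : (c • x) ⬝ᵥ (M *ᵥ (c • x)) = c * c * (x ⬝ᵥ (M *ᵥ x)) := by
  rw [mulVec_smul, smul_dotProduct, dotProduct_smul, smul_eq_mul, smul_eq_mul, mul_assoc]

theorem posDef_of_isSymm_of_forall_mem_sphere {M : Matrix ι ι ℝ} (hM : M.IsSymm)
    (hpos : ∀ x ∈ sphere (0 : ι → ℝ) 1, 0 < x ⬝ᵥ (M *ᵥ x)) : M.PosDef := by
  refine PosDef.of_dotProduct_mulVec_pos (isHermitian_iff_isSymm.mpr hM) fun x hx => ?_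
  have hnorm : 0 < ‖x‖ := norm_pos_iff.mpr hx
  have hunit : ‖x‖⁻¹ • x ∈ sphere (0 : ι → ℝ) 1 := by
    rw [mem_sphere_zero_iff_norm, norm_smul, norm_inv, norm_norm, inv_mul_cancel₀ hnorm.ne']
  have := hpos _ hunit
  rw [dotProduct_mulVec_smul_self] at this
  rw [star_trivial]
  exact pos_of_mul_pos_right this (by positivity)

end Matrix

/-- Parameter-dependent Finsler lemma: For continuous `Ψ` (symmetric
valued) and `Γ` on a compact set `ℙ`, positivity of `Ψ(π)` on `ker Γ(π)` for all
`π ∈ ℙ` is equivalent to the existence of a single `μ ∈ ℝ` with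
`Ψ(π) + μΓ(π)ᵀΓ(π) ≻ 0` for all `π ∈ ℙ`. -/
theorem stmt_13 {p n m : ℕ} (Pset : Set (Fin p → ℝ)) (hPset : IsCompact Pset)
    (Ψ : (Fin p → ℝ) → Matrix (Fin n) (Fin n) ℝ)
    (Γ : (Fin p → ℝ) → Matrix (Fin m) (Fin n) ℝ)
    (hΨsym : ∀ π ∈ Pset, (Ψ π).IsSymm)
    (hΨcont : ContinuousOn Ψ Pset) (hΓcont : ContinuousOn Γ Pset) :
    (∀ π ∈ Pset, ∀ x : Fin n → ℝ, x ≠ 0 → Γ π *ᵥ x = 0 → 0 < x ⬝ᵥ (Ψ π *ᵥ x)) ↔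
      ∃ μ : ℝ, ∀ π ∈ Pset, (Ψ π + μ • ((Γ π)ᵀ * Γ π)).PosDef := by
  have quad := fun π μ x => dotProduct_mulVec_add_smul_transpose_mul (Ψ π) (Γ π) μ x
  constructor
  · intro hker
    let K := Pset ×ˢ sphere (0 : Fin n → ℝ) 1
    have hΨK : ContinuousOn (fun z : (Fin p → ℝ) × (Fin n → ℝ) => Ψ z.1) K :=
      hΨcont.comp continuousOn_fst fun z hz => hz.1
    have hΓK : ContinuousOn (fun z : (Fin p → ℝ) × (Fin n → ℝ) => Γ z.1 *ᵥ z.2) K :=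
      (continuous_fst.matrix_mulVec continuous_snd).comp_continuousOn
        ((hΓcont.comp continuousOn_fst fun z hz => hz.1).prodMk continuousOn_snd)
    obtain ⟨μ, hμ⟩ := (hPset.prod (isCompact_sphere 0 1)).exists_forall_pos_add_mul
      ((continuous_snd.dotProduct (continuous_fst.matrix_mulVec continuous_snd)).comp_continuousOn
        (hΨK.prodMk continuousOn_snd))
      ((continuous_fst.dotProduct continuous_snd).comp_continuousOn (hΓK.prodMk hΓK))
      (fun z _ => dotProduct_self_star_nonneg _)
      (fun z hz hg => hker z.1 hz.1 z.2 (ne_of_mem_sphere hz.2 one_ne_zero)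
        (dotProduct_self_eq_zero.mp hg))
    refine ⟨μ, fun π hπ => posDef_of_isSymm_of_forall_mem_sphere ?_ fun x hx => ?_⟩
    · have hΓΓ : ((Γ π)ᵀ * Γ π).IsSymm := by rw [IsSymm, transpose_mul, transpose_transpose]
      exact (hΨsym π hπ).add (hΓΓ.smul μ)
    · rw [quad]
      exact hμ (π, x) ⟨hπ, hx⟩
  · rintro ⟨μ, hμ⟩ π hπ x hx hΓx
    simpa [quad, hΓx] using (hμ π hπ).dotProduct_mulVec_pos hx
end
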